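/- arXiv:math/9406217 — 4 statements merged into one kernel-verified Lean document; each statement's English description precedes it below -/
import Mathlib

section
/- Let K be a metric space and A ⊆ K. Then the following are equivalent: χ_A ∈ D(K); A ∈ 𝒟(K); and i(A) < ∞. Moreover, if n = i(A) < ∞, then ‖χ_A‖_{qD} = n, and ‖χ_A‖_D = n if A ∩ ∂^n A = ∅, while ‖χ_A‖_D = n + 1 if A ∩ ∂^n A ≠ ∅. -/
open Filter Set Topology ENNReal

noncomputable section

universe u v

/-- The `ℓ¹`-type bound `sup_k Σ_j |φ_j(k)|` of a sequence of functions, in `ℝ≥0∞`. -/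
def DBound {K : Type u} [MetricSpace K] (φ : ℕ → K → ℂ) : ℝ≥0∞ :=
  ⨆ k : K, ∑' j : ℕ, (‖φ j k‖₊ : ℝ≥0∞)

/-- `φ` is a sequence of continuous functions summing pointwise to `f`. -/
def IsDRep {K : Type u} [MetricSpace K] (f : K → ℂ) (φ : ℕ → K → ℂ) : Prop :=
  (∀ j, Continuous (φ j)) ∧ ∀ k, HasSum (fun j => φ j k) (f k)

/-- `f` belongs to `D(K)`: it has a representing sequence with finite bound. -/
def MemD {K : Type u} [MetricSpace K] (f : K → ℂ) : Prop :=
  ∃ φ : ℕ → K → ℂ, IsDRep f φ ∧ DBound φ < ⊤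

/-- The `D`-norm of `f`, equal to `⊤` when `f ∉ D(K)`. -/
def DNorm {K : Type u} [MetricSpace K] (f : K → ℂ) : ℝ≥0∞ :=
  ⨅ (φ : ℕ → K → ℂ) (_ : IsDRep f φ), DBound φ

/-- The quotient `D`-seminorm: distance in `D`-norm to the bounded continuous functions. -/
def qDNorm {K : Type u} [MetricSpace K] (f : K → ℂ) : ℝ≥0∞ :=
  ⨅ (φ : K → ℂ) (_ : Continuous φ ∧ ∃ C : ℝ, ∀ k, ‖φ k‖ ≤ C), DNorm (f - φ)

/-- Upper semicontinuous envelope of `g`, computed relative to the subspace `L`. -/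
def uscEnvWithin {K : Type u} [MetricSpace K] (L : Set K) (g : K → ℝ≥0∞) (x : K) : ℝ≥0∞ :=
  ⨅ U ∈ 𝓝 x, ⨆ y ∈ U ∩ L, g y

/-- `limsup_{y→x, y ∈ L} (|f(y) - f(x)| + g(y))` (non-exclusive limsup, relative to `L`). -/
def toscSuccWithin {K : Type u} [MetricSpace K] (f : K → ℂ) (L : Set K)
    (g : K → ℝ≥0∞) (x : K) : ℝ≥0∞ :=
  ⨅ U ∈ 𝓝 x, ⨆ y ∈ U ∩ L, ((‖f y - f x‖₊ : ℝ≥0∞) + g y)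

/-- The finite oscillations `osc_n (f|_L)` of `f` restricted to `L`. -/
def oscNWithin {K : Type u} [MetricSpace K] (f : K → ℂ) (L : Set K) : ℕ → K → ℝ≥0∞
  | 0 => fun _ => 0
  | n + 1 => uscEnvWithin L (toscSuccWithin f L (oscNWithin f L n))

/-- The oscillation `osc (f|_L)` of `f` restricted to `L`. -/
def oscWithin {K : Type u} [MetricSpace K] (f : K → ℂ) (L : Set K) : K → ℝ≥0∞ :=
  oscNWithin f L 1

/-- The finite oscillations `osc_n f`. -/
def oscN {K : Type u} [MetricSpace K] (f : K → ℂ) (n : ℕ) : K → ℝ≥0∞ :=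
  oscNWithin f Set.univ n

/-- `osc_ω (f|_L)`: the usc envelope (relative to `L`) of `sup_n osc_n (f|_L)`. -/
def oscOmegaWithin {K : Type u} [MetricSpace K] (f : K → ℂ) (L : Set K) : K → ℝ≥0∞ :=
  uscEnvWithin L (fun x => ⨆ n : ℕ, oscNWithin f L n x)

/-- `osc_ω f`. -/
def oscOmega {K : Type u} [MetricSpace K] (f : K → ℂ) : K → ℝ≥0∞ :=
  oscOmegaWithin f Set.univ

/-- `osc_{ω+1} (f|_L)`. -/
def oscOmegaSuccWithin {K : Type u} [MetricSpace K] (f : K → ℂ) (L : Set K) : K → ℝ≥0∞ :=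
  uscEnvWithin L (toscSuccWithin f L (oscOmegaWithin f L))

/-- The oscillation sets `os_n(f, (ε_i))` (here `ε : ℕ → ℝ` is 0-indexed, so `ε 0 = ε_1`). -/
def osSets {K : Type u} [MetricSpace K] (f : K → ℂ) (ε : ℕ → ℝ) : ℕ → Set K
  | 0 => Set.univ
  | n + 1 => {x ∈ osSets f ε n | ENNReal.ofReal (ε n) ≤ oscWithin f (osSets f ε n) x}

/-- The `ε`-Baire index `i_B(f, ε) = sup {n : os_n(f,ε) ≠ ∅} ∈ ℕ∞`. -/
def baireIndexE {K : Type u} [MetricSpace K] (f : K → ℂ) (ε : ℝ) : ℕ∞ :=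
  ⨆ (n : ℕ) (_ : (osSets f (fun _ => ε) n).Nonempty), (n : ℕ∞)

/-- The Baire index `i_B(f) = sup_{ε > 0} i_B(f,ε)`. -/
def baireIndexTotal {K : Type u} [MetricSpace K] (f : K → ℂ) : ℕ∞ :=
  ⨆ (ε : ℝ) (_ : 0 < ε), baireIndexE f ε

/-- The sets `os_n(f, ω, ε)` defined using `osc_ω` of successive restrictions. -/
def osOmegaSets {K : Type u} [MetricSpace K] (f : K → ℂ) (ε : ℝ≥0∞) : ℕ → Set K
  | 0 => Set.univ
  | n + 1 => {x ∈ osOmegaSets f ε n | ε ≤ oscOmegaWithin f (osOmegaSets f ε n) x}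

/-- The index `i(f, ω, ε)`, valued in `ℝ≥0∞`. -/
def iOmega {K : Type u} [MetricSpace K] (f : K → ℂ) (ε : ℝ≥0∞) : ℝ≥0∞ :=
  ⨆ (n : ℕ) (_ : (osOmegaSets f ε n).Nonempty), (n : ℝ≥0∞)

/-- The transfinite oscillations `osc_β f`. -/
def oscOrd {K : Type u} [MetricSpace K] (f : K → ℂ) (β : Ordinal.{v}) : K → ℝ≥0∞ :=
  Ordinal.limitRecOn β (fun _ => 0)
    (fun _ ih => uscEnvWithin Set.univ (toscSuccWithin f Set.univ ih))
    (fun γ _ ih => uscEnvWithin Set.univ (fun x => ⨆ (α : Ordinal) (h : α < γ), ih α h x))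

/-- The weight of a topological space: least cardinality of a basis. -/
def tweight (K : Type u) [TopologicalSpace K] : Cardinal.{u} :=
  ⨅ (B : Set (Set K)) (_ : TopologicalSpace.IsTopologicalBasis B), Cardinal.mk B

/-- `f` belongs to `B_{1/4}(K)`. -/
def MemB14 {K : Type u} [MetricSpace K] (f : K → ℂ) : Prop :=
  ∃ (g : ℕ → K → ℂ) (lam : ℝ≥0∞), lam < ⊤ ∧
    (∀ n, MemD (g n) ∧ DNorm (g n) ≤ lam) ∧ TendstoUniformly g f atTop

/-- The `B_{1/4}`-norm of `f`. -/
def B14Norm {K : Type u} [MetricSpace K] (f : K → ℂ) : ℝ≥0∞ :=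
  ⨅ (lam : ℝ≥0∞) (_ : ∃ g : ℕ → K → ℂ,
    (∀ n, MemD (g n) ∧ DNorm (g n) ≤ lam) ∧ TendstoUniformly g f atTop), lam

/-- `f` belongs to `SD(K)`: the closure in `D`-norm of the simple `D`-functions. -/
def MemSD {K : Type u} [MetricSpace K] (f : K → ℂ) : Prop :=
  MemD f ∧ ∀ ε : ℝ≥0∞, 0 < ε →
    ∃ φ : K → ℂ, (Set.range φ).Finite ∧ MemD φ ∧ DNorm (f - φ) < ε

/-- The algebra of sets generated by the open subsets of `K`. -/
inductive DAlg (K : Type u) [TopologicalSpace K] : Set K → Prop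
  | basic (U : Set K) : IsOpen U → DAlg K U
  | compl (A : Set K) : DAlg K A → DAlg K Aᶜ
  | union (A B : Set K) : DAlg K A → DAlg K B → DAlg K (A ∪ B)

/-- `W` is a difference of two closed sets. -/
def IsDCS {K : Type u} [TopologicalSpace K] (W : Set K) : Prop :=
  ∃ A B : Set K, IsClosed A ∧ IsClosed B ∧ W = A \ B

/-- The boundary of `A ∩ L` relative to the subspace `L`. -/
def relBoundary {K : Type u} [TopologicalSpace K] (L A : Set K) : Set K :=
  L ∩ closure (A ∩ L) ∩ closure (L \ A)

/-- The iterated boundaries `∂^n A` (with `∂^0 A = K`). -/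
def iterBoundary {K : Type u} [TopologicalSpace K] (A : Set K) : ℕ → Set K
  | 0 => Set.univ
  | n + 1 => relBoundary (iterBoundary A n) A

/-- The Baire index `i(A)` of a set: the largest `n` with `∂^n A ≠ ∅`. -/
def setIndex {K : Type u} [TopologicalSpace K] (A : Set K) : ℕ∞ :=
  ⨆ (n : ℕ) (_ : (iterBoundary A n).Nonempty), (n : ℕ∞)

/-- The iterated derived sets `K^{(n)}` of the space `K`. -/
def derivedIter (K : Type u) [TopologicalSpace K] : ℕ → Set K
  | 0 => Set.univ
  | n + 1 => {x | AccPt x (Filter.principal (derivedIter K n))}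

end

namespace Stmt8
open Metric Finset

noncomputable section
set_option linter.unusedSectionVars false

universe u
variable {K : Type u} [MetricSpace K]

/-- pointwise cost of a representation -/
def pcost (φ : ℕ → K → ℂ) (x : K) : ℝ≥0∞ := ∑' j, (‖φ j x‖₊ : ℝ≥0∞)

lemma pcost_le_DBound (φ : ℕ → K → ℂ) (x : K) : pcost φ x ≤ DBound φ := le_iSup _ x

lemma DBound_le {φ : ℕ → K → ℂ} {c : ℝ≥0∞} (h : ∀ x, pcost φ x ≤ c) : DBound φ ≤ c :=
  iSup_le h

lemma dnorm_le_of_rep {f : K → ℂ} {φ : ℕ → K → ℂ} (h : IsDRep f φ) :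
    DNorm f ≤ DBound φ := iInf₂_le φ h

lemma le_dnorm {f : K → ℂ} {c : ℝ≥0∞} (h : ∀ φ, IsDRep f φ → c ≤ DBound φ) :
    c ≤ DNorm f := le_iInf₂ h

lemma isDRep_congr {f g : K → ℂ} {φ : ℕ → K → ℂ} (h : IsDRep f φ) (hfg : ∀ x, f x = g x) :
    IsDRep g φ := ⟨h.1, fun k => (hfg k) ▸ h.2 k⟩

lemma summable_norm_of_pcost_ne_top {φ : ℕ → K → ℂ} {x : K} (h : pcost φ x ≠ ⊤) :
    Summable fun i => ‖φ i x‖ := by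
  have h1 : Summable fun i => ‖φ i x‖₊ := ENNReal.tsum_coe_ne_top_iff_summable.1 h
  simpa [coe_nnnorm] using (NNReal.summable_coe.2 h1)

lemma pcost_eq_ofReal {φ : ℕ → K → ℂ} {x : K} (h : pcost φ x ≠ ⊤) :
    pcost φ x = ENNReal.ofReal (∑' i, ‖φ i x‖) := by
  have hs := summable_norm_of_pcost_ne_top h
  rw [ENNReal.ofReal_tsum_of_nonneg (fun i => norm_nonneg _) hs]
  simp only [pcost, ofReal_norm, enorm_eq_nnnorm]

/-- the norm of the sum is at most the pointwise cost -/
lemma enorm_le_pcost {f : K → ℂ} {φ : ℕ → K → ℂ} (h : IsDRep f φ) (x : K) :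
    (‖f x‖₊ : ℝ≥0∞) ≤ pcost φ x := by
  by_cases htop : pcost φ x = ⊤
  · simp [htop]
  · have hs := summable_norm_of_pcost_ne_top htop
    have h1 : ‖f x‖ ≤ ∑' i, ‖φ i x‖ := by
      rw [← (h.2 x).tsum_eq]
      exact norm_tsum_le_tsum_norm hs
    rw [pcost_eq_ofReal htop]
    calc (‖f x‖₊ : ℝ≥0∞) = ENNReal.ofReal ‖f x‖ := by rw [ofReal_norm, enorm_eq_nnnorm]
    _ ≤ _ := ENNReal.ofReal_le_ofReal h1

/-- interleave two representations -/
def ilv (φ ψ : ℕ → K → ℂ) : ℕ → K → ℂ := fun i => if Even i then φ (i / 2) else ψ (i / 2)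

lemma ilv_two_mul (φ ψ : ℕ → K → ℂ) (k : ℕ) : ilv φ ψ (2 * k) = φ k := by
  have h2 : Even (2 * k) := even_two_mul k
  have hd : 2 * k / 2 = k := by omega
  simp only [ilv, if_pos h2, hd]

lemma ilv_two_mul_add_one (φ ψ : ℕ → K → ℂ) (k : ℕ) : ilv φ ψ (2 * k + 1) = ψ k := by
  have h2 : ¬ Even (2 * k + 1) := by simp [Nat.even_add_one, parity_simps]
  have hd : (2 * k + 1) / 2 = k := by omega
  simp only [ilv, if_neg h2, hd]

lemma isDRep_ilv {f g : K → ℂ} {φ ψ : ℕ → K → ℂ} (hf : IsDRep f φ) (hg : IsDRep g ψ) :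
    IsDRep (fun x => f x + g x) (ilv φ ψ) := by
  constructor
  · intro j
    unfold ilv
    split_ifs
    · exact hf.1 _
    · exact hg.1 _
  · intro k
    have he : HasSum (fun i => ilv φ ψ (2 * i) k) (f k) := by
      simp only [ilv_two_mul]; exact hf.2 k
    have ho : HasSum (fun i => ilv φ ψ (2 * i + 1) k) (g k) := by
      simp only [ilv_two_mul_add_one]; exact hg.2 k
    exact HasSum.even_add_odd (f := fun j => ilv φ ψ j k) he ho

lemma pcost_ilv (φ ψ : ℕ → K → ℂ) (x : K) :
    pcost (ilv φ ψ) x = pcost φ x + pcost ψ x := by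
  have he : HasSum (fun i => (‖ilv φ ψ (2 * i) x‖₊ : ℝ≥0∞)) (pcost φ x) := by
    simp only [ilv_two_mul]; exact ENNReal.summable.hasSum
  have ho : HasSum (fun i => (‖ilv φ ψ (2 * i + 1) x‖₊ : ℝ≥0∞)) (pcost ψ x) := by
    simp only [ilv_two_mul_add_one]; exact ENNReal.summable.hasSum
  exact (HasSum.even_add_odd (f := fun j => (‖ilv φ ψ j x‖₊ : ℝ≥0∞)) he ho).tsum_eq

/-- the zero representation -/
lemma isDRep_zero : IsDRep (fun _ : K => (0:ℂ)) (fun _ _ => 0) :=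
  ⟨fun _ => continuous_const, fun _ => hasSum_zero⟩

lemma pcost_zero (x : K) : pcost (fun _ _ => (0:ℂ)) x = 0 := by simp [pcost]

end
end Stmt8

namespace Stmt8
noncomputable section
set_option linter.unusedSectionVars false
open Metric Finset
open scoped Classical
universe u
variable {K : Type u} [MetricSpace K]

/-- increasing continuous approximations to the indicator of an open set -/
def lscApx (W : Set K) (k : ℕ) (x : K) : ℝ :=
  if Wᶜ = ∅ then min 1 (k : ℝ) else min 1 (k * infDist x Wᶜ)

lemma lscApx_continuous (W : Set K) (k : ℕ) : Continuous (lscApx W k) := by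
  unfold lscApx
  split_ifs
  · exact continuous_const
  · exact continuous_const.min (continuous_const.mul (continuous_infDist_pt _))

lemma lscApx_le_one (W : Set K) (k : ℕ) (x : K) : lscApx W k x ≤ 1 := by
  unfold lscApx; split_ifs <;> exact min_le_left _ _

lemma lscApx_zero (W : Set K) (x : K) : lscApx W 0 x = 0 := by
  unfold lscApx; split_ifs <;> simp

lemma lscApx_mono (W : Set K) {k k' : ℕ} (h : k ≤ k') (x : K) :
    lscApx W k x ≤ lscApx W k' x := by
  unfold lscApx
  split_ifs
  · exact min_le_min le_rfl (by exact_mod_cast h)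
  · exact min_le_min le_rfl (mul_le_mul_of_nonneg_right (by exact_mod_cast h) infDist_nonneg)

lemma lscApx_tendsto (W : Set K) (hW : IsOpen W) (x : K) :
    Filter.Tendsto (fun k => lscApx W k x) Filter.atTop
      (nhds (W.indicator (fun _ => (1:ℝ)) x)) := by
  by_cases hx : x ∈ W
  · rw [Set.indicator_of_mem hx]
    by_cases hc : Wᶜ = ∅
    · apply tendsto_atTop_of_eventually_const (i₀ := 1)
      intro k hk
      unfold lscApx; rw [if_pos hc, min_eq_left]; exact_mod_cast hk
    · have hd : 0 < infDist x Wᶜ := by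
        rw [← hW.isClosed_compl.notMem_iff_infDist_pos (Set.nonempty_iff_ne_empty.2 hc)]
        simpa using hx
      obtain ⟨N, hN⟩ := exists_nat_ge (1 / infDist x Wᶜ)
      apply tendsto_atTop_of_eventually_const (i₀ := N)
      intro k hk
      unfold lscApx; rw [if_neg hc, min_eq_left]
      have h2 : 1 / infDist x Wᶜ ≤ (k : ℝ) := le_trans hN (by exact_mod_cast hk)
      rw [div_le_iff₀ hd] at h2; linarith
  · rw [Set.indicator_of_notMem hx]
    have hc : Wᶜ ≠ ∅ := Set.nonempty_iff_ne_empty.1 ⟨x, hx⟩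
    have : ∀ k, lscApx W k x = 0 := by
      intro k
      unfold lscApx
      have hx' : x ∈ Wᶜ := hx
      rw [if_neg hc, Metric.infDist_zero_of_mem hx', mul_zero, min_eq_right (by norm_num)]
    simp only [this]; exact tendsto_const_nhds

/-- the telescoping representation of `s • g • χ_W` -/
def telRep (s : ℂ) (g : K → ℝ) (W : Set K) : ℕ → K → ℂ :=
  fun k x => s * Complex.ofReal (g x) * ((lscApx W (k+1) x - lscApx W k x : ℝ) : ℂ)

lemma telRep_spec {s : ℂ} (hs : ‖s‖ ≤ 1) {g : K → ℝ} (hgc : Continuous g)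
    (hg0 : ∀ x, 0 ≤ g x) {W : Set K} (hW : IsOpen W) :
    IsDRep (fun x => s * Complex.ofReal (g x) * (Complex.ofReal (W.indicator (fun _ => (1:ℝ)) x))) (telRep s g W) ∧
    ∀ x, pcost (telRep s g W) x ≤ ENNReal.ofReal (g x * W.indicator (fun _ => (1:ℝ)) x) := by
  have hterm : ∀ (x : K) (k : ℕ), 0 ≤ lscApx W (k+1) x - lscApx W k x :=
    fun x k => sub_nonneg.2 (lscApx_mono W (Nat.le_succ k) x)
  have hpartial : ∀ (x : K) (m : ℕ),
      ∑ k ∈ Finset.range m, (lscApx W (k+1) x - lscApx W k x) = lscApx W m x := by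
    intro x m
    rw [Finset.sum_range_sub (f := fun k => lscApx W k x), lscApx_zero, sub_zero]
  have hsummable : ∀ x : K, Summable (fun k => lscApx W (k+1) x - lscApx W k x) := by
    intro x
    apply summable_of_sum_range_le (c := 1) (fun k => hterm x k)
    intro m; rw [hpartial]; exact lscApx_le_one W m x
  have htsum : ∀ x : K, HasSum (fun k => lscApx W (k+1) x - lscApx W k x)
      (W.indicator (fun _ => (1:ℝ)) x) := by
    intro x
    have h1 := (hsummable x).hasSum
    have h3 : Filter.Tendsto (fun m => ∑ k ∈ Finset.range m, (lscApx W (k+1) x - lscApx W k x))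
        Filter.atTop (nhds (W.indicator (fun _ => (1:ℝ)) x)) := by
      simp only [hpartial]; exact lscApx_tendsto W hW x
    rwa [tendsto_nhds_unique h1.tendsto_sum_nat h3] at h1
  constructor
  · constructor
    · intro k
      apply (continuous_const.mul (Complex.continuous_ofReal.comp hgc)).mul
      exact Complex.continuous_ofReal.comp
        ((lscApx_continuous W (k+1)).sub (lscApx_continuous W k))
    · intro x
      have h1 : HasSum (fun k => Complex.ofReal (lscApx W (k+1) x - lscApx W k x))
          (Complex.ofReal (W.indicator (fun _ => (1:ℝ)) x)) := Complex.hasSum_ofReal.2 (htsum x)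
      simpa [telRep, mul_assoc] using h1.mul_left (s * Complex.ofReal (g x))
  · intro x
    have hb : ∀ k, (‖telRep s g W k x‖₊ : ℝ≥0∞)
        ≤ ENNReal.ofReal (g x * (lscApx W (k+1) x - lscApx W k x)) := by
      intro k
      rw [← enorm_eq_nnnorm, ← ofReal_norm]
      apply ENNReal.ofReal_le_ofReal
      unfold telRep
      rw [norm_mul, norm_mul, Complex.norm_real, Complex.norm_real,
        Real.norm_of_nonneg (hg0 x), Real.norm_of_nonneg (hterm x k)]
      have := mul_le_mul_of_nonneg_right (mul_le_mul_of_nonneg_right hs (hg0 x)) (hterm x k)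
      simpa using this
    calc pcost (telRep s g W) x
        ≤ ∑' k, ENNReal.ofReal (g x * (lscApx W (k+1) x - lscApx W k x)) :=
          ENNReal.tsum_le_tsum hb
      _ = ENNReal.ofReal (∑' k, g x * (lscApx W (k+1) x - lscApx W k x)) :=
          (ENNReal.ofReal_tsum_of_nonneg (fun k => mul_nonneg (hg0 x) (hterm x k))
            ((hsummable x).mul_left _)).symm
      _ = ENNReal.ofReal (g x * W.indicator (fun _ => (1:ℝ)) x) := by
          rw [tsum_mul_left, (htsum x).tsum_eq]

/-- representation of a finite signed combination of open indicators weighted by continuous functions -/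
lemma rep_finsum (m : ℕ) (s : ℕ → ℂ) (hs : ∀ j, ‖s j‖ ≤ 1) (g : ℕ → K → ℝ)
    (hgc : ∀ j, Continuous (g j)) (hg0 : ∀ j x, 0 ≤ g j x)
    (W : ℕ → Set K) (hW : ∀ j, IsOpen (W j)) :
    ∃ φ : ℕ → K → ℂ,
      IsDRep (fun x => ∑ j ∈ Finset.range m,
        s j * Complex.ofReal (g j x) * (Complex.ofReal ((W j).indicator (fun _ => (1:ℝ)) x))) φ ∧
      ∀ x, pcost φ x ≤ ∑ j ∈ Finset.range m,
        ENNReal.ofReal (g j x * (W j).indicator (fun _ => (1:ℝ)) x) := by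
  induction m with
  | zero => exact ⟨fun _ _ => 0, isDRep_congr isDRep_zero (by simp), by simp [pcost_zero]⟩
  | succ m ih =>
    obtain ⟨φ, hφ, hφc⟩ := ih
    obtain ⟨hrep, hcost⟩ := telRep_spec (hs m) (hgc m) (hg0 m) (hW m)
    refine ⟨ilv φ (telRep (s m) (g m) (W m)), isDRep_congr (isDRep_ilv hφ hrep) ?_, fun x => ?_⟩
    · intro x; rw [Finset.sum_range_succ]
    · rw [pcost_ilv, Finset.sum_range_succ]
      exact add_le_add (hφc x) (hcost x)

end
end Stmt8

namespace Stmt8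
noncomputable section
set_option linter.unusedSectionVars false
open Metric Finset
universe u
variable {K : Type u} [MetricSpace K]

lemma relBoundary_subset (L A : Set K) : relBoundary L A ⊆ L :=
  fun _ h => h.1.1

lemma iterBoundary_succ_subset (A : Set K) (n : ℕ) :
    iterBoundary A (n+1) ⊆ iterBoundary A n :=
  relBoundary_subset _ _

lemma iterBoundary_antitone (A : Set K) {n k : ℕ} (h : n ≤ k) :
    iterBoundary A k ⊆ iterBoundary A n := by
  induction k with
  | zero => simp_all
  | succ k ih =>
    rcases Nat.eq_or_lt_of_le h with h1 | h1
    · subst h1; rfl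
    · exact (iterBoundary_succ_subset A k).trans (ih (by omega))

lemma iterBoundary_closed (A : Set K) (n : ℕ) : IsClosed (iterBoundary A n) := by
  induction n with
  | zero => exact isClosed_univ
  | succ n ih => exact (ih.inter isClosed_closure).inter isClosed_closure

/-- The key lower bound: at a point of the n-th iterated boundary, any representation
of `χ_A - ψ` (with `ψ` continuous) has pointwise cost at least `n` below its bound. -/
lemma key_lower {A : Set K} {ψ : K → ℂ} (hψ : Continuous ψ) {φ : ℕ → K → ℂ}
    (h : IsDRep (fun x => A.indicator (fun _ => (1:ℂ)) x - ψ x) φ) (n : ℕ) :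
    ∀ x ∈ iterBoundary A n, pcost φ x + n ≤ DBound φ := by
  by_cases hM : DBound φ = ⊤
  · intro x _; rw [hM]; exact le_top
  have hpc : ∀ y : K, pcost φ y ≠ ⊤ :=
    fun y hy => hM (top_le_iff.1 (hy ▸ pcost_le_DBound φ y))
  have hsum : ∀ y : K, Summable fun i => ‖φ i y‖ :=
    fun y => summable_norm_of_pcost_ne_top (hpc y)
  set χ : K → ℂ := fun z => A.indicator (fun _ => (1:ℂ)) z with hχ
  set f : K → ℂ := fun z => χ z - ψ z with hf
  set G : K → ℝ := fun y => ∑' i, ‖φ i y‖ with hG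
  set M' : ℝ := (DBound φ).toReal with hM'
  have hGM : ∀ y : K, G y ≤ M' := by
    intro y
    have h1 : pcost φ y ≤ DBound φ := pcost_le_DBound φ y
    rw [pcost_eq_ofReal (hpc y)] at h1
    exact (ENNReal.ofReal_le_iff_le_toReal hM).1 h1
  have hGnn : ∀ y : K, 0 ≤ G y := fun y => tsum_nonneg (fun i => norm_nonneg _)
  have main : ∀ n : ℕ, ∀ x ∈ iterBoundary A n, G x + n ≤ M' := by
    intro n
    induction n with
    | zero => intro x _; simpa using hGM x
    | succ n ih =>
      intro x hx
      obtain ⟨⟨hxL, hxA⟩, hxB⟩ := hx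
      apply _root_.le_of_forall_pos_le_add
      intro ε hε
      set δ := ε / 5 with hδ
      have hδ0 : 0 < δ := by positivity
      obtain ⟨m, hm⟩ : ∃ m, ∑' i, ‖φ (i + m) x‖ < δ :=
        ((tendsto_sum_nat_add (fun i => ‖φ i x‖)).eventually_lt_const hδ0).exists
      have hScont : Continuous fun y => (∑ i ∈ Finset.range m, ‖φ i y - φ i x‖) + ‖ψ y - ψ x‖ := by
        apply Continuous.add
        · exact continuous_finset_sum _ (fun i _ => ((h.1 i).sub continuous_const).norm)
        · exact (hψ.sub continuous_const).norm
      set V : Set K := {y | (∑ i ∈ Finset.range m, ‖φ i y - φ i x‖) + ‖ψ y - ψ x‖ < δ} with hV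
      have hVopen : IsOpen V := isOpen_lt hScont continuous_const
      have hxV : x ∈ V := by simp [hV, hδ0]
      obtain ⟨y, hyV, hyL, hyind⟩ : ∃ y, y ∈ V ∧ y ∈ iterBoundary A n ∧
          ‖χ y - χ x‖ = 1 := by
        by_cases hxA' : x ∈ A
        · obtain ⟨y, hyV, hyS⟩ := _root_.mem_closure_iff.1 hxB V hVopen hxV
          refine ⟨y, hyV, hyS.1, ?_⟩
          simp [hχ, Set.indicator_of_mem hxA', Set.indicator_of_notMem hyS.2]
        · obtain ⟨y, hyV, hyS⟩ := _root_.mem_closure_iff.1 hxA V hVopen hxV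
          refine ⟨y, hyV, hyS.2, ?_⟩
          simp [hχ, Set.indicator_of_notMem hxA', Set.indicator_of_mem hyS.1]
      have hSV : ∑ i ∈ Finset.range m, ‖φ i y - φ i x‖ < δ := by
        have h0 : (0:ℝ) ≤ ‖ψ y - ψ x‖ := norm_nonneg _
        have := hyV; rw [hV] at this; simp only [Set.mem_setOf_eq] at this; linarith
      have hψV : ‖ψ y - ψ x‖ < δ := by
        have h0 : (0:ℝ) ≤ ∑ i ∈ Finset.range m, ‖φ i y - φ i x‖ :=
          Finset.sum_nonneg (fun i _ => norm_nonneg _)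
        have := hyV; rw [hV] at this; simp only [Set.mem_setOf_eq] at this; linarith
      have hsub : ∀ z : K, ∑ i ∈ Finset.range m, φ i z + ∑' i, φ (i + m) z = f z := by
        intro z
        rw [Summable.sum_add_tsum_nat_add m ((h.2 z).summable), (h.2 z).tsum_eq]
      have htailsum : ∀ z : K, Summable fun i => ‖φ (i + m) z‖ :=
        fun z => (summable_nat_add_iff m).2 (hsum z)
      have hnormR : ∀ z : K, ‖∑' i, φ (i + m) z‖ ≤ ∑' i, ‖φ (i + m) z‖ :=
        fun z => norm_tsum_le_tsum_norm (htailsum z)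
      -- ‖f y - f x‖ ≥ 1 - δ
      have hfyx : (1 : ℝ) - δ ≤ ‖f y - f x‖ := by
        have heq : f y - f x = (χ y - χ x) - (ψ y - ψ x) := by rw [hf]; ring
        have h1 := norm_sub_norm_le (χ y - χ x) (ψ y - ψ x)
        rw [← heq, hyind] at h1
        linarith
      -- ‖f y - f x‖ ≤ δ + T y + δ
      have hfyx2 : ‖f y - f x‖ ≤ δ + (∑' i, ‖φ (i + m) y‖) + δ := by
        have heq : f y - f x = (∑ i ∈ Finset.range m, (φ i y - φ i x))
            + ((∑' i, φ (i + m) y) - ∑' i, φ (i + m) x) := by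
          rw [← hsub y, ← hsub x, Finset.sum_sub_distrib]; ring
        calc ‖f y - f x‖
            ≤ ‖∑ i ∈ Finset.range m, (φ i y - φ i x)‖
              + ‖(∑' i, φ (i + m) y) - ∑' i, φ (i + m) x‖ := by rw [heq]; exact norm_add_le _ _
          _ ≤ (∑ i ∈ Finset.range m, ‖φ i y - φ i x‖)
              + (‖∑' i, φ (i + m) y‖ + ‖∑' i, φ (i + m) x‖) :=
                add_le_add (norm_sum_le _ _) (norm_sub_le _ _)
          _ ≤ δ + ((∑' i, ‖φ (i + m) y‖) + δ) := by
              refine add_le_add hSV.le (add_le_add (hnormR y) ((hnormR x).trans hm.le))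
          _ = δ + (∑' i, ‖φ (i + m) y‖) + δ := by ring
      have hTy : (1:ℝ) - 3*δ ≤ ∑' i, ‖φ (i + m) y‖ := by linarith
      -- head comparison
      have hhead : ∑ i ∈ Finset.range m, ‖φ i x‖ - δ ≤ ∑ i ∈ Finset.range m, ‖φ i y‖ := by
        have h1 : ∑ i ∈ Finset.range m, ‖φ i x‖ ≤ ∑ i ∈ Finset.range m, (‖φ i y‖ + ‖φ i y - φ i x‖) := by
          apply Finset.sum_le_sum
          intro i _
          have := norm_sub_norm_le (φ i x) (φ i y)
          have h2 : ‖φ i x - φ i y‖ = ‖φ i y - φ i x‖ := norm_sub_rev _ _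
          linarith
        rw [Finset.sum_add_distrib] at h1
        linarith
      have hGy : G y = ∑ i ∈ Finset.range m, ‖φ i y‖ + ∑' i, ‖φ (i + m) y‖ :=
        (Summable.sum_add_tsum_nat_add m (hsum y)).symm
      have hGx : G x = ∑ i ∈ Finset.range m, ‖φ i x‖ + ∑' i, ‖φ (i + m) x‖ :=
        (Summable.sum_add_tsum_nat_add m (hsum x)).symm
      have hIH := ih y hyL
      have hδε : δ * 5 = ε := by rw [hδ]; ring
      push_cast
      linarith
  intro x hx
  have h1 := main n x hx
  have h2 : pcost φ x + (n : ℝ≥0∞) = ENNReal.ofReal (G x + n) := by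
    rw [ENNReal.ofReal_add (hGnn x) (by positivity), pcost_eq_ofReal (hpc x),
      ENNReal.ofReal_natCast]
  have h3 : IsDRep (fun z => χ z - ψ z) φ := h
  rw [h2, ← ENNReal.ofReal_toReal hM]
  exact ENNReal.ofReal_le_ofReal h1

end
end Stmt8

namespace Stmt8
noncomputable section
set_option linter.unusedSectionVars false
open Metric Finset
open scoped Classical
universe u
variable {K : Type u} [MetricSpace K]

lemma iterB_zero (A : Set K) : iterBoundary A 0 = Set.univ := rfl

/-- the relatively open part of `L_k` inside `A` -/
def PP (A : Set K) (k : ℕ) : Set K := iterBoundary A k \ closure (iterBoundary A k \ A)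
/-- the relatively open part of `L_k` inside `Aᶜ` -/
def QQ (A : Set K) (k : ℕ) : Set K := iterBoundary A k \ closure (A ∩ iterBoundary A k)

lemma PP_subset_A (A : Set K) (k : ℕ) : PP A k ⊆ A := by
  intro x hx
  by_contra hxA
  exact hx.2 (subset_closure ⟨hx.1, hxA⟩)

lemma QQ_not_mem_A {A : Set K} {k : ℕ} {x : K} (hx : x ∈ QQ A k) : x ∉ A :=
  fun hxA => hx.2 (subset_closure ⟨hxA, hx.1⟩)

lemma PP_subset (A : Set K) (k : ℕ) : PP A k ⊆ iterBoundary A k := fun _ h => h.1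
lemma QQ_subset (A : Set K) (k : ℕ) : QQ A k ⊆ iterBoundary A k := fun _ h => h.1

lemma pp_or_qq {A : Set K} {k : ℕ} {x : K} (hx : x ∈ iterBoundary A k)
    (h1 : x ∉ iterBoundary A (k+1)) : x ∈ PP A k ∨ x ∈ QQ A k := by
  by_cases h2 : x ∈ closure (iterBoundary A k \ A)
  · right
    refine ⟨hx, fun h3 => h1 ?_⟩
    exact ⟨⟨hx, h3⟩, h2⟩
  · exact Or.inl ⟨hx, h2⟩

lemma isClosed_M (A : Set K) (k : ℕ) : IsClosed (iterBoundary A (k+1) ∪ PP A k) := by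
  apply isClosed_of_closure_subset
  rw [closure_union, (iterBoundary_closed A (k+1)).closure_eq]
  apply Set.union_subset Set.subset_union_left
  intro x hx
  have hxL : x ∈ iterBoundary A k :=
    closure_minimal (PP_subset A k) (iterBoundary_closed A k) hx
  have hxA : x ∈ closure (A ∩ iterBoundary A k) :=
    closure_mono (show PP A k ⊆ A ∩ iterBoundary A k from
      fun y hy => ⟨PP_subset_A A k hy, hy.1⟩) hx
  by_cases hcl : x ∈ closure (iterBoundary A k \ A)
  · exact Or.inl ⟨⟨hxL, hxA⟩, hcl⟩
  · exact Or.inr ⟨hxL, hcl⟩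

lemma isClosed_N (A : Set K) (k : ℕ) : IsClosed (iterBoundary A (k+1) ∪ QQ A k) := by
  apply isClosed_of_closure_subset
  rw [closure_union, (iterBoundary_closed A (k+1)).closure_eq]
  apply Set.union_subset Set.subset_union_left
  intro x hx
  have hxL : x ∈ iterBoundary A k :=
    closure_minimal (QQ_subset A k) (iterBoundary_closed A k) hx
  have hxB : x ∈ closure (iterBoundary A k \ A) :=
    closure_mono (show QQ A k ⊆ iterBoundary A k \ A from
      fun y hy => ⟨hy.1, QQ_not_mem_A hy⟩) hx
  by_cases hcl : x ∈ closure (A ∩ iterBoundary A k)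
  · exact Or.inl ⟨⟨hxL, hcl⟩, hxB⟩
  · exact Or.inr ⟨hxL, hcl⟩

/-- the canonical chain of closed sets attached to `A` -/
def chainC (A : Set K) (m j : ℕ) : Set K :=
  if j ≤ m then
    (if Even j then iterBoundary A (m - j + 1) ∪ QQ A (m - j)
     else iterBoundary A (m - j + 1) ∪ PP A (m - j))
  else Set.univ

lemma chainC_top (A : Set K) (m : ℕ) : chainC A m (m+1) = Set.univ := by
  unfold chainC; rw [if_neg (by omega)]

lemma chainC_closed (A : Set K) (m j : ℕ) : IsClosed (chainC A m j) := by
  unfold chainC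
  split_ifs
  · exact isClosed_N A _
  · exact isClosed_M A _
  · exact isClosed_univ

lemma chainC_subset_iter {A : Set K} {m j : ℕ} (hj : j ≤ m) :
    chainC A m j ⊆ iterBoundary A (m - j) := by
  unfold chainC
  rw [if_pos hj]
  split_ifs
  · exact Set.union_subset (iterBoundary_antitone A (by omega)) (QQ_subset A _)
  · exact Set.union_subset (iterBoundary_antitone A (by omega)) (PP_subset A _)

lemma iter_subset_chainC {A : Set K} {m j : ℕ} (hj : j ≤ m) :
    iterBoundary A (m - j + 1) ⊆ chainC A m j := by
  unfold chainC; rw [if_pos hj]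
  split_ifs <;> exact Set.subset_union_left

lemma chainC_mono_succ (A : Set K) (m j : ℕ) : chainC A m j ⊆ chainC A m (j+1) := by
  by_cases hj1 : j + 1 ≤ m
  · have hj : j ≤ m := by omega
    have h2 := iter_subset_chainC (A := A) hj1
    have he : m - (j+1) + 1 = m - j := by omega
    rw [he] at h2
    exact (chainC_subset_iter hj).trans h2
  · intro x _
    show x ∈ chainC A m (j+1)
    unfold chainC; rw [if_neg hj1]; trivial

lemma chainC_mono (A : Set K) (m : ℕ) {j j' : ℕ} (h : j ≤ j') :
    chainC A m j ⊆ chainC A m j' := by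
  induction j' with
  | zero =>
    have : j = 0 := by omega
    subst this; rfl
  | succ j' ih =>
    rcases Nat.eq_or_lt_of_le h with h1 | h1
    · subst h1; rfl
    · exact (ih (by omega)).trans (chainC_mono_succ A m j')

lemma chainC_piece {A : Set K} {m j : ℕ} {x : K} (hj : j ≤ m)
    (hx1 : x ∈ chainC A m (j+1)) (hx0 : x ∉ chainC A m j) :
    if Even j then x ∈ A else x ∉ A := by
  set k := m - j with hk
  have hxq : x ∉ iterBoundary A (k+1) := fun h => hx0 (iter_subset_chainC hj h)
  by_cases hE : Even j
  · rw [if_pos hE]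
    have hxQ : x ∉ QQ A k := by
      intro h
      apply hx0
      unfold chainC; rw [if_pos hj, if_pos hE]
      exact Or.inr h
    by_cases hj1 : j + 1 ≤ m
    · have hkk : m - (j+1) = k - 1 := by omega
      have hkk2 : m - (j+1) + 1 = k := by omega
      have hE1 : ¬ Even (j+1) := by simp [Nat.even_add_one, hE]
      unfold chainC at hx1
      rw [if_pos hj1, if_neg hE1, hkk2, hkk] at hx1
      rcases hx1 with hx1 | hx1
      · rcases pp_or_qq hx1 hxq with h | h
        · exact PP_subset_A A k h
        · exact absurd h hxQ
      · exact PP_subset_A A (k-1) hx1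
    · have hk0 : k = 0 := by omega
      have hxk : x ∈ iterBoundary A k := by rw [hk0, iterB_zero]; trivial
      rcases pp_or_qq hxk hxq with h | h
      · exact PP_subset_A A k h
      · exact absurd h hxQ
  · rw [if_neg hE]
    have hxP : x ∉ PP A k := by
      intro h
      apply hx0
      unfold chainC; rw [if_pos hj, if_neg hE]
      exact Or.inr h
    intro hxA
    by_cases hj1 : j + 1 ≤ m
    · have hkk : m - (j+1) = k - 1 := by omega
      have hkk2 : m - (j+1) + 1 = k := by omega
      have hE1 : Even (j+1) := by simpa [Nat.even_add_one] using hE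
      unfold chainC at hx1
      rw [if_pos hj1, if_pos hE1, hkk2, hkk] at hx1
      rcases hx1 with hx1 | hx1
      · rcases pp_or_qq hx1 hxq with h | h
        · exact hxP h
        · exact QQ_not_mem_A h hxA
      · exact QQ_not_mem_A hx1 hxA
    · have hk0 : k = 0 := by omega
      have hxk : x ∈ iterBoundary A k := by rw [hk0, iterB_zero]; trivial
      rcases pp_or_qq hxk hxq with h | h
      · exact hxP h
      · exact QQ_not_mem_A h hxA

lemma chainC_zero_disj {A : Set K} {m : ℕ} (hA : A ∩ iterBoundary A (m+1) = ∅) {x : K}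
    (hxA : x ∈ A) : x ∉ chainC A m 0 := by
  intro hx
  unfold chainC at hx
  rw [if_pos (Nat.zero_le m), if_pos Even.zero, Nat.sub_zero] at hx
  rcases hx with hx | hx
  · exact absurd (Set.mem_inter hxA hx) (by rw [hA]; exact Set.notMem_empty x)
  · exact QQ_not_mem_A hx hxA

lemma chain_identity {A : Set K} {m : ℕ} (hA : A ∩ iterBoundary A (m+1) = ∅) (x : K) :
    A.indicator (fun _ => (1:ℂ)) x
      = ∑ j ∈ Finset.range (m+1),
          (-1:ℂ)^j * Complex.ofReal ((chainC A m j)ᶜ.indicator (fun _ => (1:ℝ)) x) := by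
  have hex : ∃ j, x ∈ chainC A m j := ⟨m+1, by rw [chainC_top]; trivial⟩
  set d := Nat.find hex with hd
  have hdspec : x ∈ chainC A m d := Nat.find_spec hex
  have hdle : d ≤ m + 1 := Nat.find_le (by rw [chainC_top]; trivial)
  have hterm : ∀ j, ((chainC A m j)ᶜ.indicator (fun _ => (1:ℝ)) x)
      = if j < d then 1 else 0 := by
    intro j
    by_cases h : j < d
    · rw [if_pos h]
      apply Set.indicator_of_mem
      intro hc
      exact absurd (Nat.find_le hc) (Nat.not_le.2 h)
    · rw [if_neg h]
      apply Set.indicator_of_notMem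
      simp only [Set.mem_compl_iff, not_not]
      exact chainC_mono A m (by omega) hdspec
  calc A.indicator (fun _ => (1:ℂ)) x
      = ∑ j ∈ Finset.range d, (-1:ℂ)^j := ?_
    _ = ∑ j ∈ Finset.range (m+1),
          (-1:ℂ)^j * Complex.ofReal ((chainC A m j)ᶜ.indicator (fun _ => (1:ℝ)) x) := ?_
  · rw [neg_one_geom_sum]
    by_cases hxA : x ∈ A
    · have hd0 : d ≠ 0 := fun h0 => chainC_zero_disj hA hxA (h0 ▸ hdspec)
      obtain ⟨j, hjd⟩ : ∃ j, d = j + 1 := ⟨d - 1, by omega⟩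
      have hjm : j ≤ m := by omega
      have hp := chainC_piece hjm (hjd ▸ hdspec) (Nat.find_min hex (by omega))
      have hEj : Even j := by
        by_contra hE
        rw [if_neg hE] at hp; exact hp hxA
      have hEd : ¬ Even d := by rw [hjd]; simp [Nat.even_add_one, hEj]
      rw [if_neg hEd, Set.indicator_of_mem hxA]
    · have hEd : Even d := by
        rcases Nat.eq_zero_or_pos d with h0 | h0
        · rw [h0]; exact Even.zero
        · obtain ⟨j, hjd⟩ : ∃ j, d = j + 1 := ⟨d - 1, by omega⟩
          have hjm : j ≤ m := by omega
          have hp := chainC_piece hjm (hjd ▸ hdspec) (Nat.find_min hex (by omega))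
          have hEj : ¬ Even j := by
            intro hE
            rw [if_pos hE] at hp; exact hxA hp
          rw [hjd]; simpa [Nat.even_add_one] using hEj
      rw [if_pos hEd, Set.indicator_of_notMem hxA]
  · calc ∑ j ∈ Finset.range d, (-1:ℂ)^j
        = ∑ j ∈ Finset.range d,
            (-1:ℂ)^j * Complex.ofReal ((chainC A m j)ᶜ.indicator (fun _ => (1:ℝ)) x) := by
          apply Finset.sum_congr rfl
          intro j hj
          rw [hterm j, if_pos (Finset.mem_range.1 hj)]
          simp
      _ = _ := by
          apply Finset.sum_subset (Finset.range_subset_range.2 hdle)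
          intro j _ hjd
          rw [hterm j, if_neg (fun h => hjd (Finset.mem_range.2 h))]
          simp

end
end Stmt8

namespace Stmt8
noncomputable section
set_option linter.unusedSectionVars false
open Metric Finset
open scoped Classical
universe u
variable {K : Type u} [MetricSpace K]

lemma ofReal_indicator_le_one (S : Set K) (x : K) :
    ENNReal.ofReal (S.indicator (fun _ => (1:ℝ)) x) ≤ 1 := by
  by_cases h : x ∈ S
  · rw [Set.indicator_of_mem h]; simp
  · rw [Set.indicator_of_notMem h]; simp

lemma exists_rep_chi {A : Set K} {m : ℕ} (hA : A ∩ iterBoundary A (m+1) = ∅) :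
    ∃ φ : ℕ → K → ℂ, IsDRep (A.indicator fun _ => (1:ℂ)) φ ∧ DBound φ ≤ (m+1 : ℕ) := by
  obtain ⟨φ, hrep, hcost⟩ := rep_finsum (m+1) (fun j => (-1:ℂ)^j)
    (fun j => by simp)
    (fun _ _ => 1) (fun _ => continuous_const) (fun _ _ => zero_le_one)
    (fun j => (chainC A m j)ᶜ) (fun j => (chainC_closed A m j).isOpen_compl)
  refine ⟨φ, isDRep_congr hrep ?_, ?_⟩
  · intro x
    rw [chain_identity hA x]
    apply Finset.sum_congr rfl
    intro j _
    rw [Complex.ofReal_one, mul_one]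
  · apply DBound_le
    intro x
    refine (hcost x).trans ?_
    calc ∑ j ∈ Finset.range (m+1),
          ENNReal.ofReal ((1:ℝ) * (chainC A m j)ᶜ.indicator (fun _ => (1:ℝ)) x)
        ≤ ∑ _j ∈ Finset.range (m+1), 1 := Finset.sum_le_sum (fun j _ => by
            rw [one_mul]; exact ofReal_indicator_le_one _ x)
      _ = (m+1 : ℕ) := by simp

lemma dnorm_chi_le {A : Set K} {m : ℕ} (hA : A ∩ iterBoundary A (m+1) = ∅) :
    DNorm (A.indicator fun _ => (1:ℂ)) ≤ (m+1 : ℕ) := by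
  obtain ⟨φ, h1, h2⟩ := exists_rep_chi hA
  exact (dnorm_le_of_rep h1).trans h2

lemma memD_chi_of_chain {A : Set K} {m : ℕ} (hA : A ∩ iterBoundary A (m+1) = ∅) :
    MemD (A.indicator fun _ => (1:ℂ)) := by
  obtain ⟨φ, h1, h2⟩ := exists_rep_chi hA
  exact ⟨φ, h1, lt_of_le_of_lt h2 (by exact_mod_cast ENNReal.natCast_lt_top (m+1))⟩

/-! ### MemD is closed under algebra operations -/

lemma memD_congr {f g : K → ℂ} (h : MemD f) (hfg : ∀ x, f x = g x) : MemD g := by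
  obtain ⟨φ, h1, h2⟩ := h; exact ⟨φ, isDRep_congr h1 hfg, h2⟩

lemma memD_add {f g : K → ℂ} (hf : MemD f) (hg : MemD g) : MemD (fun x => f x + g x) := by
  obtain ⟨φ, h1, h2⟩ := hf; obtain ⟨ψ, h3, h4⟩ := hg
  refine ⟨ilv φ ψ, isDRep_ilv h1 h3, ?_⟩
  apply lt_of_le_of_lt (DBound_le (fun x => ?_)) (ENNReal.add_lt_top.2 ⟨h2, h4⟩)
  rw [pcost_ilv]
  exact add_le_add (pcost_le_DBound φ x) (pcost_le_DBound ψ x)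

lemma memD_neg {f : K → ℂ} (hf : MemD f) : MemD (fun x => - f x) := by
  obtain ⟨φ, h1, h2⟩ := hf
  refine ⟨fun i x => - φ i x, ⟨fun i => (h1.1 i).neg, fun k => (h1.2 k).neg⟩, ?_⟩
  have hp : ∀ x, pcost (fun (i:ℕ) (x:K) => - φ i x) x = pcost φ x := by
    intro x; unfold pcost; simp
  exact lt_of_le_of_lt (DBound_le (fun x => (hp x) ▸ pcost_le_DBound φ x)) h2

lemma memD_const (c : ℂ) : MemD (fun _ : K => c) := by
  refine ⟨fun i _ => if i = 0 then c else 0,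
    ⟨fun i => continuous_const, fun k => ?_⟩, ?_⟩
  · exact hasSum_ite_eq 0 c
  · apply lt_of_le_of_lt (DBound_le (c := (‖c‖₊ : ℝ≥0∞)) (fun x => ?_)) ENNReal.coe_lt_top
    unfold pcost
    have : ∀ i : ℕ, (‖if i = 0 then c else 0‖₊ : ℝ≥0∞)
        = if i = 0 then (‖c‖₊ : ℝ≥0∞) else 0 := by
      intro i; split_ifs <;> simp
    rw [tsum_congr this, tsum_ite_eq]

lemma memD_sub {f g : K → ℂ} (hf : MemD f) (hg : MemD g) : MemD (fun x => f x - g x) := by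
  apply memD_congr (memD_add hf (memD_neg hg))
  intro x; ring

set_option maxHeartbeats 1000000 in
lemma memD_mul {f g : K → ℂ} (hf : MemD f) (hg : MemD g) : MemD (fun x => f x * g x) := by
  obtain ⟨φ, h1, h2⟩ := hf; obtain ⟨ψ, h3, h4⟩ := hg
  set e : ℕ ≃ ℕ × ℕ := Nat.pairEquiv.symm with he
  have hφs : ∀ x, Summable fun i => ‖φ i x‖ := by
    intro x
    exact summable_norm_of_pcost_ne_top (ne_top_of_le_ne_top h2.ne (pcost_le_DBound φ x))
  have hψs : ∀ x, Summable fun i => ‖ψ i x‖ := by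
    intro x
    exact summable_norm_of_pcost_ne_top (ne_top_of_le_ne_top h4.ne (pcost_le_DBound ψ x))
  refine ⟨fun i x => φ (e i).1 x * ψ (e i).2 x,
    ⟨fun i => (h1.1 _).mul (h3.1 _), fun x => ?_⟩, ?_⟩
  · have hsum2 : Summable fun p : ℕ × ℕ => φ p.1 x * ψ p.2 x :=
      summable_mul_of_summable_norm (f := fun i => φ i x) (g := fun i => ψ i x) (hφs x) (hψs x)
    have h := HasSum.mul (f := fun i => φ i x) (g := fun i => ψ i x) (h1.2 x) (h3.2 x) hsum2
    exact (Equiv.hasSum_iff (f := fun p : ℕ × ℕ => φ p.1 x * ψ p.2 x) e).2 h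
  · apply lt_of_le_of_lt (DBound_le (fun x => ?_)) (ENNReal.mul_lt_top h2 h4)
    have step1 : pcost (fun i x => φ (e i).1 x * ψ (e i).2 x) x
        = ∑' p : ℕ × ℕ, ((‖φ p.1 x‖₊ : ℝ≥0∞) * (‖ψ p.2 x‖₊ : ℝ≥0∞)) := by
      unfold pcost
      rw [← Equiv.tsum_eq e (fun p : ℕ × ℕ => ((‖φ p.1 x‖₊ : ℝ≥0∞) * (‖ψ p.2 x‖₊ : ℝ≥0∞)))]
      apply tsum_congr
      intro i
      rw [nnnorm_mul]
      push_cast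
      ring
    rw [step1,
      ENNReal.tsum_prod (f := fun a b => (‖φ a x‖₊ : ℝ≥0∞) * (‖ψ b x‖₊ : ℝ≥0∞))]
    calc ∑' (a : ℕ) (b : ℕ), ((‖φ a x‖₊ : ℝ≥0∞) * (‖ψ b x‖₊ : ℝ≥0∞))
        = ∑' (a : ℕ), (‖φ a x‖₊ : ℝ≥0∞) * ∑' (b : ℕ), (‖ψ b x‖₊ : ℝ≥0∞) := by
          apply tsum_congr; intro a; rw [ENNReal.tsum_mul_left]
      _ = (∑' (a : ℕ), (‖φ a x‖₊ : ℝ≥0∞)) * ∑' (b : ℕ), (‖ψ b x‖₊ : ℝ≥0∞) := by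
          rw [ENNReal.tsum_mul_right]
      _ ≤ DBound φ * DBound ψ :=
          mul_le_mul' (pcost_le_DBound φ x) (pcost_le_DBound ψ x)

lemma memD_chi_open {U : Set K} (hU : IsOpen U) : MemD (U.indicator fun _ => (1:ℂ)) := by
  obtain ⟨hrep, hcost⟩ := telRep_spec (s := 1) (by norm_num) (g := fun _ => (1:ℝ))
    continuous_const (fun _ => zero_le_one) hU
  refine ⟨_, isDRep_congr hrep (fun x => ?_), ?_⟩
  · by_cases h : x ∈ U <;>
      simp [Set.indicator_of_mem, Set.indicator_of_notMem, h]
  · apply lt_of_le_of_lt (DBound_le (c := 1) (fun x => (hcost x).trans ?_)) ENNReal.one_lt_top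
    rw [one_mul]; exact ofReal_indicator_le_one U x

lemma memD_of_dalg {A : Set K} (h : DAlg K A) : MemD (A.indicator fun _ => (1:ℂ)) := by
  induction h with
  | basic U hU => exact memD_chi_open hU
  | compl A hA ih =>
    apply memD_congr (memD_sub (memD_const 1) ih)
    intro x
    by_cases h : x ∈ A <;> simp [Set.indicator_apply, h]
  | union A B hA hB ihA ihB =>
    apply memD_congr (memD_add ihA (memD_sub ihB (memD_mul ihA ihB)))
    intro x
    by_cases ha : x ∈ A <;> by_cases hb : x ∈ B <;>
      simp [Set.indicator_apply, ha, hb]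

/-! ### DAlg helpers -/

lemma dalg_inter {A B : Set K} (hA : DAlg K A) (hB : DAlg K B) : DAlg K (A ∩ B) := by
  have h := DAlg.compl _ (DAlg.union _ _ (DAlg.compl _ hA) (DAlg.compl _ hB))
  rwa [Set.compl_union, compl_compl, compl_compl] at h

lemma dalg_closed {C : Set K} (hC : IsClosed C) : DAlg K C := by
  have h := DAlg.compl _ (DAlg.basic _ hC.isOpen_compl)
  rwa [compl_compl] at h

lemma dalg_empty : DAlg K (∅ : Set K) := DAlg.basic _ isOpen_empty

lemma dalg_biUnion (s : Finset ℕ) (f : ℕ → Set K) (h : ∀ j ∈ s, DAlg K (f j)) :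
    DAlg K (⋃ j ∈ s, f j) := by
  classical
  induction s using Finset.induction_on with
  | empty => simpa using dalg_empty
  | @insert a s hnotmem ih =>
    rw [Finset.set_biUnion_insert]
    exact DAlg.union _ _ (h _ (Finset.mem_insert_self _ _))
      (ih fun j hj => h j (Finset.mem_insert_of_mem hj))

lemma dalg_of_chain {A : Set K} {m : ℕ} (hA : A ∩ iterBoundary A (m+1) = ∅) : DAlg K A := by
  have hrepr : A = ⋃ j ∈ Finset.range (m+1),
      (if Even j then chainC A m (j+1) ∩ (chainC A m j)ᶜ else ∅) := by
    ext x
    simp only [Set.mem_iUnion, exists_prop]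
    constructor
    · intro hxA
      have hex : ∃ j, x ∈ chainC A m j := ⟨m+1, by rw [chainC_top]; trivial⟩
      have hdspec := Nat.find_spec hex
      have hdle : Nat.find hex ≤ m + 1 := Nat.find_le (by rw [chainC_top]; trivial)
      have hd0 : Nat.find hex ≠ 0 := fun h0 => chainC_zero_disj hA hxA (h0 ▸ hdspec)
      refine ⟨Nat.find hex - 1, Finset.mem_range.2 (by omega), ?_⟩
      have he1 : Nat.find hex - 1 + 1 = Nat.find hex := by omega
      have hx1 : x ∈ chainC A m (Nat.find hex - 1 + 1) := by rw [he1]; exact hdspec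
      have hx0 : x ∉ chainC A m (Nat.find hex - 1) := Nat.find_min hex (by omega)
      have hp := chainC_piece (show Nat.find hex - 1 ≤ m by omega) hx1 hx0
      have hE : Even (Nat.find hex - 1) := by
        by_contra hE
        rw [if_neg hE] at hp; exact hp hxA
      rw [if_pos hE]
      exact ⟨hx1, hx0⟩
    · rintro ⟨j, hj, hx⟩
      by_cases hE : Even j
      · rw [if_pos hE] at hx
        have hp := chainC_piece (show j ≤ m by
          have := Finset.mem_range.1 hj; omega) hx.1 hx.2
        rwa [if_pos hE] at hp
      · rw [if_neg hE] at hx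
        exact absurd hx (Set.notMem_empty x)
  rw [hrepr]
  apply dalg_biUnion
  intro j _
  split_ifs
  · exact dalg_inter (dalg_closed (chainC_closed A m (j+1)))
      (DAlg.compl _ (dalg_closed (chainC_closed A m j)))
  · exact dalg_empty

/-! ### setIndex bookkeeping -/

lemma setIndex_lt_top_of_empty {A : Set K} (h : ∃ m, iterBoundary A m = ∅) :
    setIndex A < ⊤ := by
  obtain ⟨m, hm⟩ := h
  have h1 : setIndex A ≤ (m : ℕ∞) := by
    apply iSup₂_le
    intro n hn
    have hnm : n ≤ m := by
      by_contra hc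
      have hsub : iterBoundary A n ⊆ iterBoundary A m := iterBoundary_antitone A (by omega)
      rw [hm] at hsub
      exact absurd (hsub hn.some_mem) (Set.notMem_empty _)
    exact_mod_cast hnm
  exact lt_of_le_of_lt h1 (WithTop.coe_lt_top m)

lemma exists_empty_of_setIndex_lt_top {A : Set K} (h : setIndex A < ⊤) :
    ∃ m, iterBoundary A (m+1) = ∅ := by
  by_contra hc
  push_neg at hc
  have hall : ∀ m : ℕ, ((m+1 : ℕ) : ℕ∞) ≤ setIndex A := by
    intro m
    exact le_iSup₂ (f := fun (n:ℕ) (_ : (iterBoundary A n).Nonempty) => (n : ℕ∞)) (m+1)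
      ((hc m))
  lift setIndex A to ℕ using h.ne with k hk
  have h2 := hall k
  have h3 : k + 1 ≤ k := by exact_mod_cast h2
  omega

lemma si_succ_empty {A : Set K} {n : ℕ} (h : setIndex A = (n:ℕ∞)) :
    iterBoundary A (n+1) = ∅ := by
  by_contra hc
  have h1 : ((n+1 : ℕ) : ℕ∞) ≤ setIndex A :=
    le_iSup₂ (f := fun (k:ℕ) (_ : (iterBoundary A k).Nonempty) => (k : ℕ∞)) (n+1)
      (Set.nonempty_iff_ne_empty.2 hc)
  rw [h] at h1
  have : n + 1 ≤ n := by exact_mod_cast h1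
  omega

lemma si_nonempty {A : Set K} {n : ℕ} (h : setIndex A = (n:ℕ∞)) (hn : n ≠ 0) :
    (iterBoundary A n).Nonempty := by
  by_contra hc
  rw [Set.not_nonempty_iff_eq_empty] at hc
  have h1 : setIndex A ≤ ((n-1 : ℕ) : ℕ∞) := by
    apply iSup₂_le
    intro k hk
    have hkn : k ≤ n-1 := by
      by_contra h2
      have hsub := iterBoundary_antitone A (show n ≤ k by omega)
      rw [hc] at hsub
      exact absurd (hsub hk.some_mem) (Set.notMem_empty _)
    exact_mod_cast hkn
  rw [h] at h1
  have h3 : n ≤ n - 1 := by exact_mod_cast h1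
  omega

/-! ### lower bound corollaries -/

lemma dnorm_chi_lower {A : Set K} {n : ℕ} (hx : (iterBoundary A n).Nonempty) :
    (n:ℝ≥0∞) ≤ DNorm (A.indicator fun _ => (1:ℂ)) := by
  obtain ⟨x, hx⟩ := hx
  apply le_dnorm; intro φ hφ
  have hrep : IsDRep (fun z => A.indicator (fun _ => (1:ℂ)) z - (fun _ : K => (0:ℂ)) z) φ :=
    isDRep_congr hφ (fun z => by simp)
  exact le_trans le_add_self (key_lower continuous_const hrep n x hx)

lemma dnorm_chi_lower_nonempty {A : Set K} {n : ℕ} {x : K}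
    (hx : x ∈ A ∩ iterBoundary A n) :
    ((n:ℝ≥0∞) + 1) ≤ DNorm (A.indicator fun _ => (1:ℂ)) := by
  apply le_dnorm
  intro φ hφ
  have hrep : IsDRep (fun z => A.indicator (fun _ => (1:ℂ)) z - (fun _ : K => (0:ℂ)) z) φ :=
    isDRep_congr hφ (fun z => by simp)
  have h1 := key_lower continuous_const hrep n x hx.2
  have h2 : (1:ℝ≥0∞) ≤ pcost φ x := by
    have h3 := enorm_le_pcost hφ x
    rwa [Set.indicator_of_mem hx.1, nnnorm_one, ENNReal.coe_one] at h3
  calc (n:ℝ≥0∞) + 1 = 1 + n := by ring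
  _ ≤ pcost φ x + n := add_le_add h2 le_rfl
  _ ≤ DBound φ := h1

lemma qd_lower {A : Set K} {n : ℕ} (hx : (iterBoundary A n).Nonempty) :
    (n:ℝ≥0∞) ≤ qDNorm (A.indicator fun _ => (1:ℂ)) := by
  apply le_iInf₂
  intro ψ hψ
  obtain ⟨x, hx⟩ := hx
  apply le_dnorm
  intro φ hφ
  have hrep : IsDRep (fun z => A.indicator (fun _ => (1:ℂ)) z - ψ z) φ := hφ
  exact le_trans le_add_self (key_lower hψ.1 hrep n x hx)

lemma exists_empty_of_memD {A : Set K} (h : MemD (A.indicator fun _ => (1:ℂ))) :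
    ∃ m, iterBoundary A m = ∅ := by
  by_contra hc
  push_neg at hc
  obtain ⟨φ, hφ, hb⟩ := h
  have hrep : IsDRep (fun z => A.indicator (fun _ => (1:ℂ)) z - (fun _ : K => (0:ℂ)) z) φ :=
    isDRep_congr hφ (fun z => by simp)
  obtain ⟨m, hm⟩ := ENNReal.exists_nat_gt hb.ne
  obtain ⟨x, hx⟩ := (hc m)
  have h1 := le_trans le_add_self (key_lower continuous_const hrep m x hx)
  exact absurd (lt_of_le_of_lt h1 hm) (lt_irrefl _)

lemma empty_succ_inter {A : Set K} {m : ℕ} (hm : iterBoundary A m = ∅) :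
    A ∩ iterBoundary A (m+1) = ∅ := by
  have h1 : iterBoundary A (m+1) = ∅ :=
    Set.eq_empty_of_subset_empty (hm ▸ iterBoundary_succ_subset A m)
  rw [h1, Set.inter_empty]

end
end Stmt8

namespace Stmt8
noncomputable section
set_option linter.unusedSectionVars false
open Metric Finset
open scoped Classical
universe u
variable {K : Type u} [MetricSpace K]

lemma relBoundary_mono {L L' : Set K} (A : Set K) (h : L' ⊆ L) :
    relBoundary L' A ⊆ relBoundary L A := by
  intro x hx
  exact ⟨⟨h hx.1.1, closure_mono (Set.inter_subset_inter_right A h) hx.1.2⟩,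
    closure_mono (Set.diff_subset_diff_left h) hx.2⟩

lemma iterB_diff_subset (A C : Set K) (hC : IsClosed C) (n : ℕ)
    (hCL : C ⊆ iterBoundary A n) :
    ∀ k, k ≤ n → iterBoundary (A \ C) k ⊆ iterBoundary A k := by
  intro k
  induction k with
  | zero => intro _; exact fun x h => h
  | succ k ih =>
    intro hk
    have hk' : k ≤ n := by omega
    have hstep : iterBoundary (A \ C) (k+1) ⊆ relBoundary (iterBoundary A k) (A \ C) :=
      relBoundary_mono _ (ih hk')
    intro x hx
    obtain ⟨⟨hxL, hxc⟩, hxd⟩ := hstep hx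
    have hxc' : x ∈ closure (A ∩ iterBoundary A k) :=
      closure_mono (Set.inter_subset_inter_left _ Set.diff_subset) hxc
    have hxd' : x ∈ closure (iterBoundary A k \ A) ∪ C := by
      have hsub : iterBoundary A k \ (A \ C) ⊆ (iterBoundary A k \ A) ∪ C := by
        intro y hy
        by_cases hyC : y ∈ C
        · exact Or.inr hyC
        · exact Or.inl ⟨hy.1, fun hyA => hy.2 ⟨hyA, hyC⟩⟩
      have h2 := closure_mono hsub hxd
      rwa [closure_union, hC.closure_eq] at h2
    rcases hxd' with h | h
    · exact ⟨⟨hxL, hxc'⟩, h⟩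
    · exact iterBoundary_antitone A hk (hCL h)

lemma relBoundary_compl (L A : Set K) : relBoundary L Aᶜ = relBoundary L A := by
  unfold relBoundary
  have h1 : Aᶜ ∩ L = L \ A := by ext y; simp [Set.mem_diff]; tauto
  have h2 : L \ Aᶜ = A ∩ L := by ext y; simp [Set.mem_diff]; tauto
  rw [h1, h2]
  ext y; simp only [Set.mem_inter_iff]; tauto

lemma iterB_compl (A : Set K) (n : ℕ) : iterBoundary Aᶜ n = iterBoundary A n := by
  induction n with
  | zero => rfl
  | succ n ih =>
    show relBoundary _ _ = relBoundary _ _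
    rw [ih, relBoundary_compl]

lemma isClosed_inter_iter {A : Set K} {n : ℕ} (h : iterBoundary A (n+1) = ∅) :
    IsClosed (A ∩ iterBoundary A n) := by
  apply isClosed_of_closure_subset
  intro x hx
  have hxL : x ∈ iterBoundary A n :=
    closure_minimal Set.inter_subset_right (iterBoundary_closed A n) hx
  by_cases hxA : x ∈ A
  · exact ⟨hxA, hxL⟩
  · exfalso
    have hmem : x ∈ relBoundary (iterBoundary A n) A :=
      ⟨⟨hxL, hx⟩, subset_closure ⟨hxL, hxA⟩⟩
    have h2 : x ∈ iterBoundary A (n+1) := hmem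
    rw [h] at h2
    exact h2

lemma isClosed_diff_iter {A : Set K} {n : ℕ} (h : iterBoundary A (n+1) = ∅) :
    IsClosed (iterBoundary A n \ A) := by
  apply isClosed_of_closure_subset
  intro x hx
  have hxL : x ∈ iterBoundary A n :=
    closure_minimal Set.diff_subset (iterBoundary_closed A n) hx
  by_cases hxA : x ∈ A
  · exfalso
    have hmem : x ∈ relBoundary (iterBoundary A n) A :=
      ⟨⟨hxL, subset_closure ⟨hxA, hxL⟩⟩, hx⟩
    have h2 : x ∈ iterBoundary A (n+1) := hmem
    rw [h] at h2
    exact h2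
  · exact ⟨hxL, hxA⟩

/-- the qD upper bound -/
lemma qd_upper {A : Set K} {n : ℕ} (hA : iterBoundary A (n+1) = ∅) :
    qDNorm (A.indicator fun _ => (1:ℂ)) ≤ (n : ℝ≥0∞) := by
  -- Urysohn function: 1 on A ∩ L_n, 0 on L_n \ A
  obtain ⟨ψ₀, hψ0, hψ1, hψI⟩ := exists_continuous_zero_one_of_isClosed
    (isClosed_diff_iter hA) (isClosed_inter_iter hA)
    (Set.disjoint_left.2 (fun x hx1 hx2 => hx1.2 hx2.1))
  set ψc : K → ℂ := fun x => Complex.ofReal (ψ₀ x) with hψc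
  have hψcc : Continuous ψc := Complex.continuous_ofReal.comp ψ₀.continuous
  have hψbd : ∃ C : ℝ, ∀ k, ‖ψc k‖ ≤ C := by
    refine ⟨1, fun k => ?_⟩
    rw [hψc]
    simp only [Complex.norm_real, Real.norm_eq_abs, abs_le]
    exact ⟨by linarith [(hψI k).1], (hψI k).2⟩
  have hstep : qDNorm (A.indicator fun _ => (1:ℂ))
      ≤ DNorm ((A.indicator fun _ => (1:ℂ)) - ψc) := iInf₂_le ψc ⟨hψcc, hψbd⟩
  refine hstep.trans ?_
  -- now bound the DNorm of f - ψc
  cases n with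
  | zero =>
    -- f - ψc = 0
    have hzero : ∀ x, (A.indicator (fun _ => (1:ℂ)) x - ψc x) = 0 := by
      intro x
      by_cases hx : x ∈ A
      · have h1 : ψ₀ x = 1 := hψ1 ⟨hx, Set.mem_univ x⟩
        rw [Set.indicator_of_mem hx, hψc]
        simp [h1]
      · have h1 : ψ₀ x = 0 := hψ0 ⟨Set.mem_univ x, hx⟩
        rw [Set.indicator_of_notMem hx, hψc]
        simp [h1]
    have hrep : IsDRep ((A.indicator fun _ => (1:ℂ)) - ψc) (fun _ _ => 0) :=
      isDRep_congr isDRep_zero (fun x => ((hzero x).symm : (0:ℂ) = _))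
    refine (dnorm_le_of_rep hrep).trans ?_
    simp only [Nat.cast_zero]
    exact DBound_le (fun x => by rw [pcost_zero])
  | succ n' =>
    set L : Set K := iterBoundary A (n'+1) with hL
    set B : Set K := A \ L with hB
    set G : Set K := Aᶜ \ L with hG
    -- chain hypotheses for B and G
    have hBchain : B ∩ iterBoundary B (n'+1) = ∅ := by
      rw [Set.eq_empty_iff_forall_notMem]
      rintro x ⟨hxB, hxI⟩
      have h1 : x ∈ iterBoundary A (n'+1) :=
        iterB_diff_subset A L (iterBoundary_closed A (n'+1)) (n'+1)
          (fun y hy => hy) (n'+1) le_rfl hxI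
      exact hxB.2 h1
    have hGchain : G ∩ iterBoundary G (n'+1) = ∅ := by
      rw [Set.eq_empty_iff_forall_notMem]
      rintro x ⟨hxG, hxI⟩
      have hGc : G = Aᶜ \ iterBoundary Aᶜ (n'+1) := by
        rw [hG, iterB_compl]
      have h1 : x ∈ iterBoundary Aᶜ (n'+1) := by
        apply iterB_diff_subset Aᶜ (iterBoundary Aᶜ (n'+1))
          (iterBoundary_closed Aᶜ (n'+1)) (n'+1) (fun y hy => hy) (n'+1) le_rfl
        rwa [← hGc]
      rw [iterB_compl] at h1
      exact hxG.2 h1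
    -- representations
    obtain ⟨φ₁, hrep₁, hcost₁⟩ := rep_finsum (n'+1) (fun j => (-1:ℂ)^j)
      (fun j => by simp)
      (fun _ x => 1 - ψ₀ x) (fun _ => continuous_const.sub ψ₀.continuous)
      (fun _ x => sub_nonneg.2 (hψI x).2)
      (fun j => (chainC B n' j)ᶜ) (fun j => (chainC_closed B n' j).isOpen_compl)
    obtain ⟨φ₂, hrep₂, hcost₂⟩ := rep_finsum (n'+1) (fun j => -(-1:ℂ)^j)
      (fun j => by simp)
      (fun _ x => ψ₀ x) (fun _ => ψ₀.continuous)
      (fun _ x => (hψI x).1)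
      (fun j => (chainC G n' j)ᶜ) (fun j => (chainC_closed G n' j).isOpen_compl)
    have hrep := isDRep_ilv hrep₁ hrep₂
    -- the combined function equals f - ψc
    have hkey : ∀ x,
        (∑ j ∈ Finset.range (n'+1), (-1:ℂ)^j * Complex.ofReal (1 - ψ₀ x) *
            Complex.ofReal ((chainC B n' j)ᶜ.indicator (fun _ => (1:ℝ)) x))
        + (∑ j ∈ Finset.range (n'+1), (-(-1:ℂ)^j) * Complex.ofReal (ψ₀ x) *
            Complex.ofReal ((chainC G n' j)ᶜ.indicator (fun _ => (1:ℝ)) x))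
        = A.indicator (fun _ => (1:ℂ)) x - ψc x := by
      intro x
      have hBid := chain_identity hBchain x
      have hGid := chain_identity hGchain x
      have h1 : (∑ j ∈ Finset.range (n'+1), (-1:ℂ)^j * Complex.ofReal (1 - ψ₀ x) *
            Complex.ofReal ((chainC B n' j)ᶜ.indicator (fun _ => (1:ℝ)) x))
          = Complex.ofReal (1 - ψ₀ x) * B.indicator (fun _ => (1:ℂ)) x := by
        rw [hBid, Finset.mul_sum]
        apply Finset.sum_congr rfl
        intro j _; ring
      have h2 : (∑ j ∈ Finset.range (n'+1), (-(-1:ℂ)^j) * Complex.ofReal (ψ₀ x) *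
            Complex.ofReal ((chainC G n' j)ᶜ.indicator (fun _ => (1:ℝ)) x))
          = - (Complex.ofReal (ψ₀ x) * G.indicator (fun _ => (1:ℂ)) x) := by
        rw [hGid, Finset.mul_sum, ← Finset.sum_neg_distrib]
        apply Finset.sum_congr rfl
        intro j _; ring
      rw [h1, h2]
      -- case analysis
      by_cases hxA : x ∈ A <;> by_cases hxL : x ∈ L
      · -- x ∈ A ∩ L : ψ₀ x = 1, x ∉ B, x ∉ G
        have hv : ψ₀ x = 1 := hψ1 ⟨hxA, hxL⟩
        have hxB : x ∉ B := fun h => h.2 hxL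
        have hxG : x ∉ G := fun h => h.1 hxA
        rw [Set.indicator_of_notMem hxB, Set.indicator_of_notMem hxG,
          Set.indicator_of_mem hxA, hψc]
        simp [hv]
      · -- x ∈ A \ L : x ∈ B, x ∉ G
        have hxB : x ∈ B := ⟨hxA, hxL⟩
        have hxG : x ∉ G := fun h => h.1 hxA
        rw [Set.indicator_of_mem hxB, Set.indicator_of_notMem hxG,
          Set.indicator_of_mem hxA, hψc]
        push_cast
        ring
      · -- x ∈ L \ A : ψ₀ x = 0, x ∉ B, x ∉ G
        have hv : ψ₀ x = 0 := hψ0 ⟨hxL, hxA⟩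
        have hxB : x ∉ B := fun h => hxA h.1
        have hxG : x ∉ G := fun h => h.2 hxL
        rw [Set.indicator_of_notMem hxB, Set.indicator_of_notMem hxG,
          Set.indicator_of_notMem hxA, hψc]
        simp [hv]
      · -- x ∉ A, x ∉ L : x ∈ G
        have hxB : x ∉ B := fun h => hxA h.1
        have hxG : x ∈ G := ⟨hxA, hxL⟩
        rw [Set.indicator_of_notMem hxB, Set.indicator_of_mem hxG,
          Set.indicator_of_notMem hxA, hψc]
        push_cast
        ring
    have hrep' : IsDRep ((A.indicator fun _ => (1:ℂ)) - ψc)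
        (ilv φ₁ φ₂) := isDRep_congr hrep (fun x => hkey x)
    refine (dnorm_le_of_rep hrep').trans (DBound_le (fun x => ?_))
    rw [pcost_ilv]
    refine (add_le_add (hcost₁ x) (hcost₂ x)).trans ?_
    rw [← Finset.sum_add_distrib]
    calc ∑ j ∈ Finset.range (n'+1),
          (ENNReal.ofReal ((1 - ψ₀ x) * (chainC B n' j)ᶜ.indicator (fun _ => (1:ℝ)) x)
            + ENNReal.ofReal (ψ₀ x * (chainC G n' j)ᶜ.indicator (fun _ => (1:ℝ)) x))
        ≤ ∑ _j ∈ Finset.range (n'+1), 1 := by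
          apply Finset.sum_le_sum
          intro j _
          have e1 : ENNReal.ofReal ((1 - ψ₀ x) * (chainC B n' j)ᶜ.indicator (fun _ => (1:ℝ)) x)
              ≤ ENNReal.ofReal (1 - ψ₀ x) := by
            apply ENNReal.ofReal_le_ofReal
            by_cases h : x ∈ (chainC B n' j)ᶜ
            · rw [Set.indicator_of_mem h, mul_one]
            · rw [Set.indicator_of_notMem h, mul_zero]
              linarith [(hψI x).2]
          have e2 : ENNReal.ofReal (ψ₀ x * (chainC G n' j)ᶜ.indicator (fun _ => (1:ℝ)) x)
              ≤ ENNReal.ofReal (ψ₀ x) := by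
            apply ENNReal.ofReal_le_ofReal
            by_cases h : x ∈ (chainC G n' j)ᶜ
            · rw [Set.indicator_of_mem h, mul_one]
            · rw [Set.indicator_of_notMem h, mul_zero]
              exact (hψI x).1
          refine (add_le_add e1 e2).trans ?_
          rw [← ENNReal.ofReal_add (by linarith [(hψI x).2]) (hψI x).1]
          rw [show (1 - ψ₀ x) + ψ₀ x = 1 by ring]
          simp
      _ = ((n'+1 : ℕ) : ℝ≥0∞) := by simp
end
end Stmt8


/-- `χ_A ∈ D(K)` iff `A ∈ 𝒟(K)` iff `i(A) < ∞`; and if `n = i(A)` then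
`‖χ_A‖_{qD} = n`, `‖χ_A‖_D = n` when `A ∩ ∂^n A = ∅` and `‖χ_A‖_D = n+1` otherwise. -/
theorem stmt8 {K : Type u} [MetricSpace K] (A : Set K) :
    (MemD (A.indicator fun _ => (1 : ℂ)) ↔ DAlg K A) ∧
    (DAlg K A ↔ setIndex A < ⊤) ∧
    ∀ n : ℕ, setIndex A = (n : ℕ∞) →
      qDNorm (A.indicator fun _ => (1 : ℂ)) = (n : ℝ≥0∞) ∧
      (A ∩ iterBoundary A n = ∅ →
        DNorm (A.indicator fun _ => (1 : ℂ)) = (n : ℝ≥0∞)) ∧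
      ((A ∩ iterBoundary A n).Nonempty →
        DNorm (A.indicator fun _ => (1 : ℂ)) = (n : ℝ≥0∞) + 1) := by
  refine ⟨⟨?_, ?_⟩, ⟨?_, ?_⟩, ?_⟩
  · intro h
    obtain ⟨m, hm⟩ := Stmt8.exists_empty_of_memD h
    exact Stmt8.dalg_of_chain (Stmt8.empty_succ_inter hm)
  · exact Stmt8.memD_of_dalg
  · intro h
    exact Stmt8.setIndex_lt_top_of_empty (Stmt8.exists_empty_of_memD (Stmt8.memD_of_dalg h))
  · intro h
    obtain ⟨m, hm⟩ := Stmt8.exists_empty_of_setIndex_lt_top h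
    exact Stmt8.dalg_of_chain (by rw [hm]; exact Set.inter_empty A)
  · intro n hn
    have hsucc : iterBoundary A (n+1) = ∅ := Stmt8.si_succ_empty hn
    refine ⟨?_, ?_, ?_⟩
    · -- qDNorm = n
      apply le_antisymm (Stmt8.qd_upper hsucc)
      by_cases h0 : n = 0
      · subst h0; simp
      · exact Stmt8.qd_lower (Stmt8.si_nonempty hn h0)
    · -- empty case
      intro hAe
      apply le_antisymm
      · cases n with
        | zero =>
          -- A = ∅
          have hA0 : A = ∅ := by
            rw [show iterBoundary A 0 = Set.univ from rfl, Set.inter_univ] at hAe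
            exact hAe
          subst hA0
          have hrep : IsDRep ((∅ : Set K).indicator fun _ => (1:ℂ)) (fun _ _ => 0) :=
            Stmt8.isDRep_congr Stmt8.isDRep_zero (fun x => by simp)
          refine (Stmt8.dnorm_le_of_rep hrep).trans ?_
          simp only [Nat.cast_zero]
          exact Stmt8.DBound_le (fun x => by rw [Stmt8.pcost_zero])
        | succ m =>
          have h1 := Stmt8.dnorm_chi_le (m := m) hAe
          exact_mod_cast h1
      · by_cases h0 : n = 0
        · subst h0; simp
        · exact Stmt8.dnorm_chi_lower (Stmt8.si_nonempty hn h0)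
    · -- nonempty case
      intro hAne
      obtain ⟨x, hx⟩ := hAne
      apply le_antisymm
      · have h1 := Stmt8.dnorm_chi_le (m := n) (by rw [hsucc]; exact Set.inter_empty A)
        refine h1.trans ?_
        push_cast
        exact le_refl _
      · exact Stmt8.dnorm_chi_lower_nonempty hx
end

section
/- Let K be a metric space and A ⊆ K with n = i(A) < ∞. Set k = ⌊(n+1)/2⌋ if A ∩ ∂^n A = ∅, and k = ⌊n/2⌋ + 1 if A ∩ ∂^n A ≠ ∅. Then A can be written as the union of k pairwise disjoint DCS's; moreover, whenever A is the union of m pairwise disjoint DCS's, one has m ≥ k. -/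
open Filter Set Topology ENNReal

section Aux
variable {K : Type u} [MetricSpace K] (A : Set K)

lemma relBoundary_subset (L : Set K) : relBoundary L A ⊆ L := fun _ hx => hx.1.1

lemma iterBoundary_succ (n : ℕ) :
    iterBoundary A (n + 1) = relBoundary (iterBoundary A n) A := rfl

lemma iterBoundary_closed : ∀ n, IsClosed (iterBoundary A n)
  | 0 => isClosed_univ
  | n + 1 => ((iterBoundary_closed n).inter isClosed_closure).inter isClosed_closure

lemma iterBoundary_succ_subset (n : ℕ) :
    iterBoundary A (n + 1) ⊆ iterBoundary A n := relBoundary_subset A _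

lemma iterBoundary_anti {m n : ℕ} (h : m ≤ n) :
    iterBoundary A n ⊆ iterBoundary A m := by
  induction n with
  | zero => simp_all
  | succ k ih =>
    rcases Nat.lt_or_ge m (k+1) with hm | hm
    · exact (iterBoundary_succ_subset A k).trans (ih (by omega))
    · have : m = k + 1 := by omega
      subst this; exact le_refl _

lemma iterBoundary_subset_closure_inter (n : ℕ) :
    iterBoundary A (n + 1) ⊆ closure (A ∩ iterBoundary A n) := fun _ hx => hx.1.2

lemma iterBoundary_subset_closure_diff (n : ℕ) :
    iterBoundary A (n + 1) ⊆ closure (iterBoundary A n \ A) := fun _ hx => hx.2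

lemma dcs_piece (A : Set K) (m : ℕ) :
    IsDCS (A ∩ (iterBoundary A m \ iterBoundary A (m + 2))) := by
  set L := iterBoundary A m with hLdef
  set L1 := iterBoundary A (m + 1) with hL1def
  set L2 := iterBoundary A (m + 2) with hL2def
  have hL2eq : L2 = L1 ∩ closure (A ∩ L1) ∩ closure (L1 \ A) := rfl
  have hL1eq : L1 = L ∩ closure (A ∩ L) ∩ closure (L \ A) := rfl
  set B := A ∩ (L \ L2) with hB
  refine ⟨closure B, L2 ∪ closure (L1 \ A), isClosed_closure,
    (iterBoundary_closed A (m + 2)).union isClosed_closure, ?_⟩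
  classical
  have hclL1 : closure (L1 \ A) ⊆ L1 :=
    closure_minimal diff_subset (iterBoundary_closed A (m + 1))
  ext x
  constructor
  · intro hx
    refine ⟨subset_closure hx, ?_⟩
    rintro (h2 | hcl)
    · exact hx.2.2 h2
    · have hx1 : x ∈ L1 := hclL1 hcl
      exact hx.2.2 (hL2eq ▸ ⟨⟨hx1, subset_closure ⟨hx.1, hx1⟩⟩, hcl⟩)
  · rintro ⟨hxcl, hxD⟩
    have hxL : x ∈ L :=
      closure_minimal (show B ⊆ L from fun y hy => hy.2.1) (iterBoundary_closed A m) hxcl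
    have hxAL : x ∈ closure (A ∩ L) :=
      closure_mono (show B ⊆ A ∩ L from fun y hy => ⟨hy.1, hy.2.1⟩) hxcl
    by_cases hxA : x ∈ A
    · exact ⟨hxA, hxL, fun h2 => hxD (Or.inl h2)⟩
    · exfalso
      have hx1 : x ∈ L1 := hL1eq ▸ ⟨⟨hxL, hxAL⟩, subset_closure ⟨hxL, hxA⟩⟩
      exact hxD (Or.inr (subset_closure ⟨hx1, hxA⟩))

lemma construct (A : Set K) (k : ℕ) (h2k : A ∩ iterBoundary A (2 * k) = ∅) :
    ∃ W : Fin k → Set K, (∀ i, IsDCS (W i)) ∧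
      (Pairwise fun i j => Disjoint (W i) (W j)) ∧ A = ⋃ i, W i := by
  classical
  refine ⟨fun i => A ∩ (iterBoundary A (2 * (i : ℕ)) \ iterBoundary A (2 * (i : ℕ) + 2)),
    fun i => dcs_piece A (2 * (i : ℕ)), ?_, ?_⟩
  · have key : ∀ i j : Fin k, i < j →
        Disjoint (A ∩ (iterBoundary A (2 * (i : ℕ)) \ iterBoundary A (2 * (i : ℕ) + 2)))
          (A ∩ (iterBoundary A (2 * (j : ℕ)) \ iterBoundary A (2 * (j : ℕ) + 2))) := by
      intro i j hij
      rw [Set.disjoint_left]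
      intro x hxi hxj
      have hij' : (i : ℕ) < (j : ℕ) := hij
      exact hxi.2.2 (iterBoundary_anti A (by omega) hxj.2.1)
    intro i j hij
    rcases lt_or_gt_of_ne hij with h | h
    · exact key i j h
    · exact (key j i h).symm
  · ext x
    simp only [mem_iUnion]
    constructor
    · intro hxA
      have hx0 : x ∉ iterBoundary A (2 * k) := fun h =>
        (eq_empty_iff_forall_notMem.mp h2k x) ⟨hxA, h⟩
      have hk : 0 < k := by
        by_contra hk
        have hk0 : k = 0 := by omega
        subst hk0
        exact hx0 (by rw [show 2 * 0 = 0 from rfl]; exact mem_univ x)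
      have hex : ∃ i : ℕ, x ∉ iterBoundary A (2 * i + 2) :=
        ⟨k - 1, by rw [show 2 * (k - 1) + 2 = 2 * k from by omega]; exact hx0⟩
      have hlt' : Nat.find hex ≤ k - 1 := Nat.find_le (by
        rw [show 2 * (k - 1) + 2 = 2 * k from by omega]; exact hx0)
      have hlt : Nat.find hex < k := by omega
      set i0 := Nat.find hex with hi0
      have h1 : x ∉ iterBoundary A (2 * i0 + 2) := Nat.find_spec hex
      have h2 : x ∈ iterBoundary A (2 * i0) := by
        rcases Nat.eq_zero_or_pos i0 with h0 | h0
        · rw [h0, show 2 * 0 = 0 from rfl]; exact mem_univ x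
        · have hmin := Nat.find_min hex (show i0 - 1 < i0 by omega)
          rw [show 2 * i0 = 2 * (i0 - 1) + 2 from by omega]
          exact not_not.mp hmin
      exact ⟨⟨i0, hlt⟩, hxA, h2, h1⟩
    · rintro ⟨i, hxi⟩
      exact hxi.1

lemma lower_key (A : Set K) (m : ℕ) (C D : Fin m → Set K)
    (hC : ∀ i, IsClosed (C i)) (hD : ∀ i, IsClosed (D i))
    (hA : A = ⋃ i, C i \ D i) :
    ∀ (c : ℕ) (S : Finset (Fin m)), S.card = c → ∀ x : K, x ∈ A →
      x ∈ iterBoundary A (2 * c) → (∀ i ∉ S, x ∉ C i ∧ x ∉ D i) → False := by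
  intro c
  induction c with
  | zero =>
    intro S hS x hxA _ havoid
    obtain ⟨i, hi⟩ : ∃ i, x ∈ C i \ D i := by
      rw [hA] at hxA; simpa using hxA
    have hiS : i ∉ S := by
      rw [Finset.card_eq_zero.mp hS]; exact Finset.notMem_empty i
    exact (havoid i hiS).1 hi.1
  | succ c ih =>
    intro S hS x hxA hxB havoid
    obtain ⟨i, hi⟩ : ∃ i, x ∈ C i \ D i := by
      rw [hA] at hxA; simpa using hxA
    have hiS : i ∈ S := by
      by_contra h; exact (havoid i h).1 hi.1
    set F : Set K := D i ∪ ⋃ j : {j : Fin m // j ∉ S}, (C j ∪ D j) with hF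
    have hFclosed : IsClosed F :=
      (hD i).union (isClosed_iUnion_of_finite fun j => (hC j).union (hD j))
    have hxF : x ∉ F := by
      rintro (h | h)
      · exact hi.2 h
      · obtain ⟨j, hj⟩ := mem_iUnion.mp h
        rcases hj with h' | h'
        · exact (havoid j j.2).1 h'
        · exact (havoid j j.2).2 h'
    have hxcl : x ∈ closure (iterBoundary A (2 * c + 1) \ A) := by
      rw [show 2 * (c + 1) = (2 * c + 1) + 1 from by omega] at hxB
      exact iterBoundary_subset_closure_diff A (2 * c + 1) hxB
    obtain ⟨y, hyF, hyL, hyA⟩ :=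
      mem_closure_iff.mp hxcl Fᶜ hFclosed.isOpen_compl hxF
    have hyDi : y ∉ D i := fun h => hyF (Or.inl h)
    have hyCi : y ∉ C i := fun h =>
      hyA (by rw [hA]; exact mem_iUnion.mpr ⟨i, h, hyDi⟩)
    set G : Set K := ⋃ j : {j : Fin m // j ∉ S.erase i}, (C j ∪ D j) with hG
    have hGclosed : IsClosed G :=
      isClosed_iUnion_of_finite fun j => (hC j).union (hD j)
    have hyG : y ∉ G := by
      intro h
      obtain ⟨⟨j, hj⟩, hmem⟩ := mem_iUnion.mp h
      by_cases hji : j = i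
      · subst hji
        rcases hmem with h' | h'
        · exact hyCi h'
        · exact hyDi h'
      · have hjS : j ∉ S := fun hjS => hj (Finset.mem_erase.mpr ⟨hji, hjS⟩)
        exact hyF (Or.inr (mem_iUnion.mpr ⟨⟨j, hjS⟩, hmem⟩))
    have hycl : y ∈ closure (A ∩ iterBoundary A (2 * c)) :=
      iterBoundary_subset_closure_inter A (2 * c) hyL
    obtain ⟨x', hx'G, hx'A, hx'L⟩ :=
      mem_closure_iff.mp hycl Gᶜ hGclosed.isOpen_compl hyG
    have hcard : (S.erase i).card = c := by
      rw [Finset.card_erase_of_mem hiS, hS]; omega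
    refine ih (S.erase i) hcard x' hx'A hx'L fun j hj => ?_
    constructor
    · exact fun h => hx'G (mem_iUnion.mpr ⟨⟨j, hj⟩, Or.inl h⟩)
    · exact fun h => hx'G (mem_iUnion.mpr ⟨⟨j, hj⟩, Or.inr h⟩)

lemma lower_bound (A : Set K) (m : ℕ) (V : Fin m → Set K) (hV : ∀ i, IsDCS (V i))
    (hA : A = ⋃ i, V i) : A ∩ iterBoundary A (2 * m) = ∅ := by
  choose C D hC hD hCD using hV
  have hA' : A = ⋃ i, C i \ D i := by
    rw [hA]; exact iUnion_congr hCD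
  rw [eq_empty_iff_forall_notMem]
  rintro x ⟨hxA, hxB⟩
  exact lower_key A m C D hC hD hA' m Finset.univ (by simp) x hxA hxB
    (fun i hi => absurd (Finset.mem_univ i) hi)

end Aux

/-- optimal decomposition of a set of finite index into `k` pairwise
disjoint differences of closed sets. -/
theorem stmt9 {K : Type u} [MetricSpace K] (A : Set K) (n : ℕ)
    (hn : setIndex A = (n : ℕ∞)) :
    (A ∩ iterBoundary A n = ∅ →
      ((∃ W : Fin ((n + 1) / 2) → Set K, (∀ i, IsDCS (W i)) ∧
          (Pairwise fun i j => Disjoint (W i) (W j)) ∧ A = ⋃ i, W i) ∧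
        ∀ (m : ℕ) (V : Fin m → Set K), (∀ i, IsDCS (V i)) →
          (Pairwise fun i j => Disjoint (V i) (V j)) → A = ⋃ i, V i →
          (n + 1) / 2 ≤ m)) ∧
    ((A ∩ iterBoundary A n).Nonempty →
      ((∃ W : Fin (n / 2 + 1) → Set K, (∀ i, IsDCS (W i)) ∧
          (Pairwise fun i j => Disjoint (W i) (W j)) ∧ A = ⋃ i, W i) ∧
        ∀ (m : ℕ) (V : Fin m → Set K), (∀ i, IsDCS (V i)) →
          (Pairwise fun i j => Disjoint (V i) (V j)) → A = ⋃ i, V i →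
          n / 2 + 1 ≤ m)) := by
  classical
  have hL1 : iterBoundary A (n + 1) = ∅ := by
    by_contra h
    have hne : (iterBoundary A (n + 1)).Nonempty := Set.nonempty_iff_ne_empty.mpr h
    have hle : ((n + 1 : ℕ) : ℕ∞) ≤ setIndex A :=
      le_iSup₂ (f := fun (j : ℕ) (_ : (iterBoundary A j).Nonempty) => (j : ℕ∞)) (n + 1) hne
    rw [hn] at hle
    have := Nat.cast_le.mp hle
    omega
  have hLn : 1 ≤ n → (iterBoundary A n).Nonempty := by
    intro h1
    by_contra h
    have hempty : iterBoundary A n = ∅ := Set.not_nonempty_iff_eq_empty.mp h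
    have hle : setIndex A ≤ ((n - 1 : ℕ) : ℕ∞) := by
      refine iSup₂_le fun j hj => ?_
      have hjn : j < n := by
        by_contra hjn
        obtain ⟨y, hy⟩ := hj
        have hy' := iterBoundary_anti A (show n ≤ j by omega) hy
        rw [hempty] at hy'
        exact hy'
      exact Nat.cast_le.mpr (by omega)
    rw [hn] at hle
    have := Nat.cast_le.mp hle
    omega
  constructor
  · intro hcase
    constructor
    · apply construct
      have hsub : iterBoundary A (2 * ((n + 1) / 2)) ⊆ iterBoundary A n :=
        iterBoundary_anti A (by omega)
      apply Set.eq_empty_iff_forall_notMem.mpr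
      rintro x ⟨hxA, hxB⟩
      exact Set.eq_empty_iff_forall_notMem.mp hcase x ⟨hxA, hsub hxB⟩
    · intro m V hdcs _ hunion
      have hml := lower_bound A m V hdcs hunion
      by_contra hcon
      push_neg at hcon
      obtain ⟨y, hy⟩ := hLn (by omega)
      have hy1 : y ∈ iterBoundary A (2 * m + 1) :=
        iterBoundary_anti A (by omega) hy
      have hy2 := iterBoundary_subset_closure_inter A (2 * m) hy1
      rw [hml, closure_empty] at hy2
      exact hy2
  · intro hcase
    constructor
    · apply construct
      have hsub : iterBoundary A (2 * (n / 2 + 1)) ⊆ iterBoundary A (n + 1) :=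
        iterBoundary_anti A (by omega)
      apply Set.eq_empty_iff_forall_notMem.mpr
      rintro x ⟨-, hxB⟩
      have hx := hsub hxB
      rw [hL1] at hx
      exact hx
    · intro m V hdcs _ hunion
      have hml := lower_bound A m V hdcs hunion
      by_contra hcon
      push_neg at hcon
      obtain ⟨y, hyA, hyn⟩ := hcase
      exact Set.eq_empty_iff_forall_notMem.mp hml y
        ⟨hyA, iterBoundary_anti A (by omega) hyn⟩
end

section
/- Let φ : ℂ → ℂ be locally Lipschitz, i.e., Lipschitz on every compact subset of ℂ. Then for every metric space K and every f ∈ D(K), the composition φ∘f belongs to D(K). Moreover, if λ = sup_{k∈K} |f(k)| and φ is Lipschitz with constant M on the closed disc {z ∈ ℂ : |z| ≤ λ}, then ‖φ∘f‖_D ≤ sup_{|z|≤λ} |φ(z)| + M‖f‖_D. -/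
open Filter Set Topology ENNReal

/-! A globally `M`-Lipschitz `ψ` turns a representation `f = Σ g_j` into the telescoping
representation `ψ ∘ f = ψ 0 + Σ_n (ψ (s_{n+1}) - ψ (s_n))`, `s_n` the partial sums of `(g_j)`.
Its `(n+1)`-st term is bounded by `M |g_n|`, so `‖ψ ∘ f‖_D ≤ |ψ 0| + M ‖f‖_D`.
A locally Lipschitz `φ` is reduced to this case by precomposing it with the radial retraction
onto a disc containing the range of `f`; that retraction is `1`-Lipschitz, being the
nearest-point projection onto a convex set. -/

open scoped NNReal InnerProductSpace

section RadialRetraction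

variable {E : Type*} [NormedAddCommGroup E] [InnerProductSpace ℝ E]

theorem lipschitzWith_one_of_inner_sub_nonpos {s : Set E} {P : E → E} (hmem : ∀ x, P x ∈ s)
    (hvar : ∀ x, ∀ y ∈ s, ⟪x - P x, y - P x⟫_ℝ ≤ 0) : LipschitzWith 1 P := by
  refine LipschitzWith.mk_one fun x y => ?_
  rw [dist_eq_norm, dist_eq_norm]
  have hsq : ‖P x - P y‖ ^ 2 ≤ ⟪x - y, P x - P y⟫_ℝ := by
    have hx := hvar x (P y) (hmem y)
    have hy := hvar y (P x) (hmem x)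
    have hsplit : ⟪x - y, P x - P y⟫_ℝ - ‖P x - P y‖ ^ 2 =
        -⟪x - P x, P y - P x⟫_ℝ - ⟪y - P y, P x - P y⟫_ℝ := by
      rw [← real_inner_self_eq_norm_sq]
      simp only [inner_sub_left, inner_sub_right, real_inner_comm]
      ring
    linarith
  have := hsq.trans (real_inner_le_norm _ _)
  nlinarith [norm_nonneg (P x - P y), norm_nonneg (x - y)]

variable {r : ℝ} {x : E}

noncomputable def radialRetraction (r : ℝ) (x : E) : E :=
  if ‖x‖ ≤ r then x else (r / ‖x‖) • x

theorem radialRetraction_of_norm_le (h : ‖x‖ ≤ r) : radialRetraction r x = x := if_pos h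

theorem radialRetraction_of_lt_norm (h : r < ‖x‖) : radialRetraction r x = (r / ‖x‖) • x :=
  if_neg h.not_ge

theorem radialRetraction_mem_closedBall (hr : 0 ≤ r) (x : E) :
    radialRetraction r x ∈ Metric.closedBall 0 r := by
  rw [mem_closedBall_zero_iff]
  rcases le_or_gt ‖x‖ r with h | h
  · rwa [radialRetraction_of_norm_le h]
  · have hx : 0 < ‖x‖ := hr.trans_lt h
    rw [radialRetraction_of_lt_norm h, norm_smul, Real.norm_of_nonneg (by positivity),
      div_mul_cancel₀ _ hx.ne']

theorem inner_sub_radialRetraction_nonpos (hr : 0 ≤ r) (x : E) {y : E}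
    (hy : y ∈ Metric.closedBall 0 r) :
    ⟪x - radialRetraction r x, y - radialRetraction r x⟫_ℝ ≤ 0 := by
  rcases le_or_gt ‖x‖ r with h | h
  · simp [radialRetraction_of_norm_le h]
  have hx : 0 < ‖x‖ := hr.trans_lt h
  set c := r / ‖x‖
  have hc1 : c ≤ 1 := (div_le_one hx).2 h.le
  have hcx : c * ‖x‖ = r := div_mul_cancel₀ _ hx.ne'
  have hxy : ⟪x, y⟫_ℝ ≤ ‖x‖ * r :=
    (real_inner_le_norm x y).trans (by gcongr; exact mem_closedBall_zero_iff.1 hy)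
  have hexpand : ⟪x - c • x, y - c • x⟫_ℝ = (1 - c) * (⟪x, y⟫_ℝ - c * ‖x‖ ^ 2) := by
    rw [← real_inner_self_eq_norm_sq]
    simp only [inner_sub_left, inner_sub_right, real_inner_smul_left, real_inner_smul_right]
    ring
  rw [radialRetraction_of_lt_norm h, hexpand]
  exact mul_nonpos_of_nonneg_of_nonpos (sub_nonneg.2 hc1) (by nlinarith)

theorem lipschitzWith_radialRetraction (hr : 0 ≤ r) :
    LipschitzWith 1 (radialRetraction (E := E) r) :=
  lipschitzWith_one_of_inner_sub_nonpos (radialRetraction_mem_closedBall hr)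
    (fun x _ hy => inner_sub_radialRetraction_nonpos hr x hy)

theorem LipschitzOnWith.comp_radialRetraction {F : Type*} [PseudoEMetricSpace F] {φ : E → F}
    {M : ℝ≥0} (hφ : LipschitzOnWith M φ (Metric.closedBall 0 r)) (hr : 0 ≤ r) :
    LipschitzWith M (φ ∘ radialRetraction r) := by
  have := hφ.comp (lipschitzWith_radialRetraction hr).lipschitzOnWith (s := univ)
    (fun x _ => radialRetraction_mem_closedBall hr x)
  rwa [mul_one, lipschitzOnWith_univ] at this

theorem comp_radialRetraction_of_norm_le {α F : Type*} {f : α → E} {φ : E → F}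
    (hfr : ∀ a, ‖f a‖ ≤ r) : (fun a => (φ ∘ radialRetraction r) (f a)) = fun a => φ (f a) :=
  funext fun a => congrArg φ (radialRetraction_of_norm_le (hfr a))

end RadialRetraction

section Telescope

open Finset

variable {K : Type*} {g : ℕ → K → ℂ} {ψ : ℂ → ℂ} {M : ℝ≥0}

def telescopeComp (ψ : ℂ → ℂ) (g : ℕ → K → ℂ) : ℕ → K → ℂ
  | 0 => fun _ => ψ 0
  | n + 1 => fun k => ψ (∑ j ∈ range (n + 1), g j k) - ψ (∑ j ∈ range n, g j k)

theorem sum_range_succ_telescopeComp (ψ : ℂ → ℂ) (g : ℕ → K → ℂ) (k : K) (N : ℕ) :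
    ∑ n ∈ range (N + 1), telescopeComp ψ g n k = ψ (∑ j ∈ range N, g j k) := by
  induction N with
  | zero => simp [telescopeComp]
  | succ N ih => rw [sum_range_succ, ih, telescopeComp, add_sub_cancel]

theorem LipschitzWith.norm_telescopeComp_succ_le (hψ : LipschitzWith M ψ) (n : ℕ) (k : K) :
    ‖telescopeComp ψ g (n + 1) k‖ ≤ M * ‖g n k‖ := by
  have := hψ.dist_le_mul (∑ j ∈ range (n + 1), g j k) (∑ j ∈ range n, g j k)
  rwa [dist_eq_norm, dist_eq_norm, sum_range_succ_sub_sum] at this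

theorem LipschitzWith.enorm_telescopeComp_succ_le (hψ : LipschitzWith M ψ) (n : ℕ) (k : K) :
    ‖telescopeComp ψ g (n + 1) k‖ₑ ≤ M * ‖g n k‖ₑ := by
  have := hψ.edist_le_mul (∑ j ∈ range (n + 1), g j k) (∑ j ∈ range n, g j k)
  rwa [edist_eq_enorm_sub, edist_eq_enorm_sub, sum_range_succ_sub_sum] at this

end Telescope

section CompLipschitz

open Finset

variable {K : Type u} [MetricSpace K] {f : K → ℂ} {g : ℕ → K → ℂ} {ψ : ℂ → ℂ} {M : ℝ≥0}

theorem dNorm_le_dBound (hg : IsDRep f g) : DNorm f ≤ DBound g :=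
  iInf₂_le g hg

theorem dNorm_of_isEmpty [IsEmpty K] (f : K → ℂ) : DNorm f = 0 :=
  le_antisymm ((dNorm_le_dBound (g := fun _ _ => 0)
    ⟨fun _ => continuous_const, isEmptyElim⟩).trans_eq (iSup_of_empty _)) zero_le

theorem IsDRep.enorm_le_dBound (hg : IsDRep f g) (k : K) : ‖f k‖ₑ ≤ DBound g :=
  (hg.2 k).tsum_eq ▸ enorm_tsum_le_tsum_enorm.trans (le_iSup (fun k => ∑' j, ‖g j k‖ₑ) k)

theorem MemD.exists_norm_le (hf : MemD f) : ∃ C, 0 ≤ C ∧ ∀ k, ‖f k‖ ≤ C := by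
  obtain ⟨g, hg, hgB⟩ := hf
  exact ⟨(DBound g).toReal, ENNReal.toReal_nonneg, fun k =>
    toReal_enorm (f k) ▸ ENNReal.toReal_mono hgB.ne (hg.enorm_le_dBound k)⟩

theorem LipschitzWith.isDRep_telescopeComp (hψ : LipschitzWith M ψ) (hg : IsDRep f g) :
    IsDRep (fun k => ψ (f k)) (telescopeComp ψ g) := by
  refine ⟨?_, fun k => ?_⟩
  · have hpartial (n : ℕ) : Continuous fun k => ∑ j ∈ range n, g j k :=
      continuous_finsetSum _ fun j _ => hg.1 j
    rintro (_ | n)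
    · exact continuous_const
    · exact (hψ.continuous.comp (hpartial (n + 1))).sub (hψ.continuous.comp (hpartial n))
  have hsummable : Summable fun n => ‖telescopeComp ψ g n k‖ :=
    (summable_nat_add_iff 1).1 <| .of_nonneg_of_le (fun _ => norm_nonneg _)
      (hψ.norm_telescopeComp_succ_le · k) ((hg.2 k).summable.norm.mul_left (M : ℝ))
  rw [hasSum_iff_tendsto_nat_of_summable_norm hsummable, ← tendsto_add_atTop_iff_nat 1]
  simpa only [sum_range_succ_telescopeComp, Function.comp_def] using
    (hψ.continuous.tendsto _).comp (hg.2 k).tendsto_sum_nat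

theorem LipschitzWith.dBound_telescopeComp_le (hψ : LipschitzWith M ψ) (g : ℕ → K → ℂ) :
    DBound (telescopeComp ψ g) ≤ ‖ψ 0‖ₑ + M * DBound g := by
  refine iSup_le fun k => ?_
  calc ∑' n, ‖telescopeComp ψ g n k‖ₑ
      = ‖ψ 0‖ₑ + ∑' n, ‖telescopeComp ψ g (n + 1) k‖ₑ :=
        tsum_eq_zero_add' (f := fun n => ‖telescopeComp ψ g n k‖ₑ) ENNReal.summable
    _ ≤ ‖ψ 0‖ₑ + ∑' n, M * ‖g n k‖ₑ := by
      gcongr with n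
      exact hψ.enorm_telescopeComp_succ_le n k
    _ ≤ ‖ψ 0‖ₑ + M * DBound g := by
      rw [ENNReal.tsum_mul_left]
      gcongr
      exact le_iSup (fun k => ∑' j, ‖g j k‖ₑ) k

theorem MemD.comp_lipschitzWith (hf : MemD f) (hψ : LipschitzWith M ψ) :
    MemD (fun k => ψ (f k)) := by
  obtain ⟨g, hg, hgB⟩ := hf
  exact ⟨_, hψ.isDRep_telescopeComp hg, (hψ.dBound_telescopeComp_le g).trans_lt
    (ENNReal.add_lt_top.2 ⟨enorm_lt_top, ENNReal.mul_lt_top ENNReal.coe_lt_top hgB⟩)⟩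

theorem dNorm_comp_le_of_lipschitzWith (hf : MemD f) (hψ : LipschitzWith M ψ) :
    DNorm (fun k => ψ (f k)) ≤ ‖ψ 0‖ₑ + M * DNorm f := by
  obtain ⟨g₀, hg₀, -⟩ := hf
  have : Nonempty {g // IsDRep f g} := ⟨⟨g₀, hg₀⟩⟩
  have hD : DNorm f = ⨅ g : {g // IsDRep f g}, DBound g.1 := iInf_subtype'
  rw [hD, ENNReal.mul_iInf (absurd · ENNReal.coe_ne_top), ENNReal.add_iInf]
  exact le_iInf fun g => (dNorm_le_dBound (hψ.isDRep_telescopeComp g.2)).trans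
    (hψ.dBound_telescopeComp_le g.1)

end CompLipschitz

section LipschitzOnClosedBall

variable {K : Type u} [MetricSpace K] {f : K → ℂ} {φ : ℂ → ℂ} {r : ℝ} {M : ℝ≥0}

theorem MemD.comp_of_lipschitzOnWith_closedBall (hf : MemD f) (hr : 0 ≤ r)
    (hfr : ∀ k, ‖f k‖ ≤ r) (hφ : LipschitzOnWith M φ (Metric.closedBall 0 r)) :
    MemD (fun k => φ (f k)) :=
  comp_radialRetraction_of_norm_le hfr ▸ hf.comp_lipschitzWith (hφ.comp_radialRetraction hr)

theorem dNorm_comp_le_of_lipschitzOnWith_closedBall (hf : MemD f) (hfr : ∀ k, ‖f k‖ ≤ r)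
    (hφ : LipschitzOnWith M φ (Metric.closedBall 0 r)) :
    DNorm (fun k => φ (f k)) ≤ (⨆ z ∈ Metric.closedBall (0 : ℂ) r, ‖φ z‖ₑ) + M * DNorm f := by
  rcases isEmpty_or_nonempty K with _ | ⟨⟨k₀⟩⟩
  · simp [dNorm_of_isEmpty]
  have hr : 0 ≤ r := (norm_nonneg _).trans (hfr k₀)
  have hφ0 : ‖(φ ∘ radialRetraction r) 0‖ₑ ≤ ⨆ z ∈ Metric.closedBall (0 : ℂ) r, ‖φ z‖ₑ := by
    rw [Function.comp_apply, radialRetraction_of_norm_le (norm_zero.trans_le hr)]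
    exact le_iSup₂ (f := fun z _ => ‖φ z‖ₑ) 0 (Metric.mem_closedBall_self hr)
  calc DNorm (fun k => φ (f k))
      = DNorm (fun k => (φ ∘ radialRetraction r) (f k)) := by
        rw [comp_radialRetraction_of_norm_le hfr]
    _ ≤ ‖(φ ∘ radialRetraction r) 0‖ₑ + M * DNorm f :=
        dNorm_comp_le_of_lipschitzWith hf (hφ.comp_radialRetraction hr)
    _ ≤ (⨆ z ∈ Metric.closedBall (0 : ℂ) r, ‖φ z‖ₑ) + M * DNorm f := by gcongr

end LipschitzOnClosedBall

/-- locally Lipschitz functions operate on `D(K)`, with the quantitative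
bound `‖φ∘f‖_D ≤ sup_{|z|≤λ} |φ(z)| + M ‖f‖_D`. -/
theorem stmt10 (φ : ℂ → ℂ)
    (hφ : ∀ C : Set ℂ, IsCompact C → ∃ M : NNReal, LipschitzOnWith M φ C) :
    ∀ (K : Type u) [MetricSpace K], ∀ f : K → ℂ, MemD f →
      MemD (fun k => φ (f k)) ∧
      ∀ (lam : ℝ) (M : NNReal), (∀ k, ‖f k‖ ≤ lam) →
        LipschitzOnWith M φ (Metric.closedBall 0 lam) →
        DNorm (fun k => φ (f k)) ≤
          (⨆ z ∈ Metric.closedBall (0 : ℂ) lam, (‖φ z‖₊ : ℝ≥0∞)) + (M : ℝ≥0∞) * DNorm f := by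
  intro K _ f hf
  refine ⟨?_, fun lam M hlam hM => dNorm_comp_le_of_lipschitzOnWith_closedBall hf hlam hM⟩
  obtain ⟨C, hC0, hC⟩ := hf.exists_norm_le
  obtain ⟨M, hM⟩ := hφ _ (isCompact_closedBall 0 C)
  exact hf.comp_of_lipschitzOnWith_closedBall hC0 hC hM
end

section
/- Let K be a metric space with K^{(n)} ≠ ∅ for every positive integer n, and let φ : ℂ → ℂ be a function such that φ∘f ∈ D(K) for every f ∈ D(K). Then φ is locally Lipschitz, i.e., Lipschitz on every compact subset of ℂ. -/
open Filter Set Topology ENNReal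

noncomputable section Stmt11Aux
open Filter Set Topology ENNReal Metric
open scoped Classical
namespace Stmt11aux
universe u'

/-- Real-valued representation predicate. -/
def GoodRep {K : Type u} [MetricSpace K] (f : K → ℂ) (Φ : ℕ → K → ℂ) (c : ℝ) : Prop :=
  (∀ j, Continuous (Φ j)) ∧ (∀ k, HasSum (fun j => Φ j k) (f k)) ∧
    ∀ (k : K) (J : Finset ℕ), ∑ j ∈ J, ‖Φ j k‖ ≤ c

theorem GoodRep.c_nonneg {K : Type u} [MetricSpace K] {f : K → ℂ} {Φ : ℕ → K → ℂ} {c : ℝ}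
    (h : GoodRep f Φ c) (k : K) : 0 ≤ c := by
  have := h.2.2 k ∅
  simpa using this

theorem GoodRep.mono {K : Type u} [MetricSpace K] {f : K → ℂ} {Φ : ℕ → K → ℂ} {c c' : ℝ}
    (h : GoodRep f Φ c) (hcc : c ≤ c') : GoodRep f Φ c' :=
  ⟨h.1, h.2.1, fun k J => (h.2.2 k J).trans hcc⟩

theorem GoodRep.summable_norm {K : Type u} [MetricSpace K] {f : K → ℂ} {Φ : ℕ → K → ℂ} {c : ℝ}
    (h : GoodRep f Φ c) (k : K) : Summable (fun j => ‖Φ j k‖) :=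
  summable_of_sum_range_le (fun _ => norm_nonneg _) (fun n => h.2.2 k (Finset.range n))

theorem GoodRep.tsum_norm_le {K : Type u} [MetricSpace K] {f : K → ℂ} {Φ : ℕ → K → ℂ} {c : ℝ}
    (h : GoodRep f Φ c) (k : K) : ∑' j, ‖Φ j k‖ ≤ c :=
  (h.summable_norm k).tsum_le_of_sum_range_le (fun n => h.2.2 k (Finset.range n))

theorem GoodRep.memD {K : Type u} [MetricSpace K] {f : K → ℂ} {Φ : ℕ → K → ℂ} {c : ℝ}
    (h : GoodRep f Φ c) : MemD f := by
  refine ⟨Φ, ⟨h.1, h.2.1⟩, ?_⟩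
  have hb : DBound Φ ≤ ENNReal.ofReal c := by
    refine iSup_le fun k => ?_
    have h1 : ∀ j : ℕ, (‖Φ j k‖₊ : ℝ≥0∞) = ENNReal.ofReal ‖Φ j k‖ := fun j =>
      (ofReal_norm _).symm
    calc ∑' j : ℕ, (‖Φ j k‖₊ : ℝ≥0∞) = ∑' j : ℕ, ENNReal.ofReal ‖Φ j k‖ := by
          simp only [h1]
      _ = ENNReal.ofReal (∑' j, ‖Φ j k‖) :=
          (ENNReal.ofReal_tsum_of_nonneg (fun _ => norm_nonneg _) (h.summable_norm k)).symm
      _ ≤ ENNReal.ofReal c := ENNReal.ofReal_le_ofReal (h.tsum_norm_le k)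
  exact lt_of_le_of_lt hb ENNReal.ofReal_lt_top

theorem memD_goodRep {K : Type u} [MetricSpace K] {f : K → ℂ}
    (h : MemD f) : ∃ (Φ : ℕ → K → ℂ) (c : ℝ), GoodRep f Φ c := by
  obtain ⟨Φ, ⟨hc, hs⟩, hb⟩ := h
  refine ⟨Φ, (DBound Φ).toReal, hc, hs, fun k J => ?_⟩
  have h1 : (∑ j ∈ J, (‖Φ j k‖₊ : ℝ≥0∞)) ≤ DBound Φ := by
    refine le_trans ?_ (le_iSup (fun k => ∑' j : ℕ, (‖Φ j k‖₊ : ℝ≥0∞)) k)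
    exact ENNReal.sum_le_tsum J
  have h2 := ENNReal.toReal_mono hb.ne h1
  refine le_trans (le_of_eq ?_) h2
  rw [ENNReal.toReal_sum (fun j _ => ENNReal.coe_ne_top)]
  simp [coe_nnnorm]

theorem GoodRep.norm_f_le {K : Type u} [MetricSpace K] {f : K → ℂ} {Φ : ℕ → K → ℂ} {c : ℝ}
    (h : GoodRep f Φ c) (k : K) : ‖f k‖ ≤ c := by
  have h1 : f k = ∑' j, Φ j k := (h.2.1 k).tsum_eq.symm
  rw [h1]
  exact (norm_tsum_le_tsum_norm (h.summable_norm k)).trans (h.tsum_norm_le k)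

/-- Oscillation chains. -/
def chain {K : Type u} [MetricSpace K] (g : K → ℂ) (δ : ℝ) : ℕ → K → Prop
  | 0, _ => True
  | (n+1), x => ∀ ε, 0 < ε → ∃ p, dist p x < ε ∧ chain g δ n p ∧ δ ≤ dist (g p) (g x)

theorem core {K : Type u} [MetricSpace K] (Φ : ℕ → K → ℂ) (F : K → ℂ) (c : ℝ)
    (hrep : GoodRep F Φ c) (δ : ℝ) :
    ∀ (n : ℕ) (x : K), chain F δ n x → ∀ (J : ℕ) (ε : ℝ), 0 < ε →
      ∃ y, dist y x < ε ∧ (n : ℝ) * (δ/2) - ε ≤ ∑' j, ‖Φ (j + J) y‖ := by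
  have hsum : ∀ k, Summable fun j => ‖Φ j k‖ := hrep.summable_norm
  have hsumJ : ∀ (J : ℕ) (k : K), Summable fun j => ‖Φ (j + J) k‖ := fun J k =>
    (summable_nat_add_iff J).mpr (hsum k)
  set T : ℕ → K → ℝ := fun J k => ∑' j, ‖Φ (j + J) k‖ with hT
  have hTnn : ∀ J k, 0 ≤ T J k := fun J k => tsum_nonneg fun _ => norm_nonneg _
  have hGcont : ∀ J : ℕ, Continuous (fun k => ∑ j ∈ Finset.range J, Φ j k) := fun J =>
    continuous_finset_sum _ fun j _ => hrep.1 j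
  have hT1 : ∀ (J : ℕ) (k : K), ‖F k - ∑ j ∈ Finset.range J, Φ j k‖ ≤ T J k := by
    intro J k
    have h0 : HasSum (fun n => Φ (n + J) k) (F k - ∑ j ∈ Finset.range J, Φ j k) := by
      rw [hasSum_nat_add_iff (f := fun j => Φ j k) J, sub_add_cancel]
      exact hrep.2.1 k
    rw [← h0.tsum_eq]
    exact norm_tsum_le_tsum_norm (hsumJ J k)
  have hT2 : ∀ (J J' : ℕ), J ≤ J' → ∀ k,
      T J k = (∑ j ∈ Finset.Ico J J', ‖Φ j k‖) + T J' k := by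
    intro J J' hJJ k
    have h0 := Summable.sum_add_tsum_nat_add (f := fun j => ‖Φ (j + J) k‖) (J' - J) (hsumJ J k)
    have h1 : (∑ j ∈ Finset.Ico J J', ‖Φ j k‖)
        = ∑ i ∈ Finset.range (J' - J), ‖Φ (i + J) k‖ := by
      rw [Finset.sum_Ico_eq_sum_range]
      exact Finset.sum_congr rfl fun i _ => by rw [add_comm J i]
    have h2 : (∑' i : ℕ, ‖Φ (i + (J' - J) + J) k‖) = T J' k := by
      apply tsum_congr; intro i
      rw [show i + (J' - J) + J = i + J' by omega]
    show T J k = _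
    rw [h1]
    calc T J k = (∑ i ∈ Finset.range (J' - J), ‖Φ (i + J) k‖)
          + ∑' i : ℕ, ‖Φ (i + (J' - J) + J) k‖ := h0.symm
      _ = _ := by rw [h2]
  have hT3 : ∀ (J : ℕ) (k : K) (ε1 : ℝ), 0 < ε1 → ∃ J', J ≤ J' ∧ T J' k < ε1 := by
    intro J k ε1 hε1
    have h0 : Tendsto (fun i => T i k) atTop (𝓝 0) := tendsto_sum_nat_add fun j => ‖Φ j k‖
    obtain ⟨N, hN⟩ := (Metric.tendsto_atTop.mp h0) ε1 hε1
    refine ⟨max J N, le_max_left _ _, ?_⟩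
    have := hN (max J N) (le_max_right _ _)
    rw [Real.dist_eq, sub_zero] at this
    exact lt_of_le_of_lt (le_abs_self _) this
  intro n
  induction n with
  | zero =>
    intro x _ J ε hε
    refine ⟨x, by simpa using hε, ?_⟩
    push_cast
    have := hTnn J x
    linarith
  | succ n IH =>
    intro x hx J ε hε
    set G : K → ℂ := fun k => ∑ j ∈ Finset.range J, Φ j k with hG
    set ε1 := ε / 8 with hε1
    have hε1pos : 0 < ε1 := by positivity
    -- continuity of G at x
    obtain ⟨ρ0, hρ0pos, hρ0⟩ := Metric.continuousAt_iff.mp (hGcont J).continuousAt ε1 hε1pos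
    set ρ := min ρ0 (ε / 2) with hρdef
    have hρpos : 0 < ρ := lt_min hρ0pos (by positivity)
    obtain ⟨p, hpx, hpchain, hpval⟩ := hx ρ hρpos
    have hGpx : ‖G p - G x‖ < ε1 := by
      have := hρ0 (lt_of_lt_of_le hpx (min_le_left _ _))
      rwa [dist_eq_norm] at this
    have key : δ - ε1 ≤ ‖F p - G p‖ + ‖F x - G x‖ := by
      have h1 : δ ≤ ‖F p - F x‖ := by rwa [dist_eq_norm] at hpval
      have h2 : ‖F p - F x‖ ≤ ‖F p - G p‖ + ‖F x - G x‖ + ‖G p - G x‖ := by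
        have : F p - F x = (F p - G p) - (F x - G x) + (G p - G x) := by ring
        rw [this]
        calc ‖(F p - G p) - (F x - G x) + (G p - G x)‖
            ≤ ‖(F p - G p) - (F x - G x)‖ + ‖G p - G x‖ := norm_add_le _ _
          _ ≤ ‖F p - G p‖ + ‖F x - G x‖ + ‖G p - G x‖ := by
              have := norm_sub_le (F p - G p) (F x - G x); linarith
      linarith
    -- common final step, abstracted over the center where the tail is large and
    -- a chain-n point arbitrarily close to that center
    have final : ∀ q : K, dist q x < ε / 2 → δ/2 - ε1 ≤ ‖F q - G q‖ →
        (∀ η, 0 < η → ∃ p', dist p' q < η ∧ chain F δ n p') →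
        ∃ y, dist y x < ε ∧ ((n : ℝ) + 1) * (δ/2) - ε ≤ T J y := by
      intro q hqx hq hnear
      have hTJq : δ/2 - ε1 ≤ T J q := le_trans hq (hT1 J q)
      obtain ⟨J', hJJ', hJ'⟩ := hT3 J q ε1 hε1pos
      set B : K → ℝ := fun k => ∑ j ∈ Finset.Ico J J', ‖Φ j k‖ with hB
      have hBcont : Continuous B := continuous_finset_sum _ fun j _ => (hrep.1 j).norm
      have hBq : δ/2 - 2*ε1 ≤ B q := by
        have := hT2 J J' hJJ' q
        linarith
      obtain ⟨ρ1, hρ1pos, hρ1⟩ := Metric.continuousAt_iff.mp hBcont.continuousAt ε1 hε1pos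
      obtain ⟨p', hp'q, hp'chain⟩ := hnear (min ρ1 (ε/4)) (lt_min hρ1pos (by positivity))
      set ε2 := min (min ρ1 (ε/4) - dist p' q) (ε/4) with hε2
      have hε2pos : 0 < ε2 := lt_min (by linarith [hp'q]) (by positivity)
      obtain ⟨y, hyp', hy⟩ := IH p' hp'chain J' ε2 hε2pos
      have hyq : dist y q < min ρ1 (ε/4) := by
        calc dist y q ≤ dist y p' + dist p' q := dist_triangle _ _ _
          _ < ε2 + dist p' q := by linarith
          _ ≤ (min ρ1 (ε/4) - dist p' q) + dist p' q := by
              have := min_le_left (min ρ1 (ε/4) - dist p' q) (ε/4); linarith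
          _ = min ρ1 (ε/4) := by ring
      have hBy : δ/2 - 3*ε1 ≤ B y := by
        have := hρ1 (lt_of_lt_of_le hyq (min_le_left _ _))
        rw [Real.dist_eq] at this
        have habs := abs_lt.mp this
        linarith [habs.1]
      have hTy : T J y = B y + T J' y := hT2 J J' hJJ' y
      refine ⟨y, ?_, ?_⟩
      · calc dist y x ≤ dist y q + dist q x := dist_triangle _ _ _
          _ < min ρ1 (ε/4) + ε/2 := by linarith
          _ ≤ ε/4 + ε/2 := by linarith [min_le_right ρ1 (ε/4)]
          _ < ε := by linarith
      · have hε2le : ε2 ≤ ε/4 := min_le_right _ _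
        rw [hTy]
        have : (n : ℝ) * (δ/2) - ε2 ≤ T J' y := hy
        have hcalc : ((n : ℝ) + 1) * (δ/2) - ε
            ≤ (δ/2 - 3*ε1) + ((n : ℝ) * (δ/2) - ε2) := by
          rw [hε1]; ring_nf; linarith
        linarith
    rcases le_or_gt (δ/2 - ε1) ‖F p - G p‖ with hcase | hcase
    · obtain ⟨y, h1, h2⟩ := final p (lt_of_lt_of_le hpx (by
        calc ρ ≤ ε/2 := min_le_right _ _)) hcase
        (fun η hη => ⟨p, by simpa using hη, hpchain⟩)
      exact ⟨y, h1, by push_cast; exact h2⟩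
    · have hcase2 : δ/2 - ε1 ≤ ‖F x - G x‖ := by linarith
      obtain ⟨y, h1, h2⟩ := final x (by simpa using half_pos hε) hcase2
        (fun η hη => by
          obtain ⟨p2, hp2, hp2c, _⟩ := hx η hη
          exact ⟨p2, hp2, hp2c⟩)
      exact ⟨y, h1, by push_cast; exact h2⟩

variable {K : Type u} [MetricSpace K]

theorem goodRep_const (a : ℂ) :
    GoodRep (fun _ : K => a) (fun j _ => if j = 0 then a else 0) ‖a‖ := by
  refine ⟨fun j => continuous_const, fun k => hasSum_ite_eq 0 a, fun k J => ?_⟩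
  have h1 : ∀ j, ‖if j = 0 then a else (0:ℂ)‖ = if j = 0 then ‖a‖ else 0 := by
    intro j; split <;> simp
  simp only [h1]
  rw [Finset.sum_ite_eq' J 0 (fun _ => ‖a‖)]
  split <;> simp

theorem goodRep_indicator (F : Set K) (hF : IsClosed F) (a : ℂ) :
    ∃ Φ, GoodRep (fun k => if k ∈ F then a else 0) Φ (2 * ‖a‖) := by
  classical
  rcases F.eq_empty_or_nonempty with rfl | hne
  · refine ⟨fun _ _ => 0, fun j => continuous_const, fun k => by simpa using hasSum_zero,
      fun k J => by simp⟩
  · set t : ℕ → K → ℝ := fun j x => if j = 0 then 0 else max 0 (1 - j * infDist x F) with ht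
    set Φ : ℕ → K → ℂ := fun j x => a * (((t (j+1) x - t j x : ℝ)) : ℂ) with hΦ
    have htcont : ∀ j, Continuous (t j) := by
      intro j
      rw [ht]; dsimp only
      split
      · exact continuous_const
      · exact continuous_const.max
          (continuous_const.sub (continuous_const.mul (continuous_infDist_pt F)))
    have ht01 : ∀ j x, 0 ≤ t j x ∧ t j x ≤ 1 := by
      intro j x
      rw [ht]; dsimp only
      split
      · norm_num
      · constructor
        · exact le_max_left _ _
        · have h2 : (0:ℝ) ≤ (j:ℝ) * infDist x F :=
            mul_nonneg (by positivity) infDist_nonneg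
          rw [max_le_iff]; constructor <;> nlinarith
    have hmono : ∀ (j : ℕ) (x : K), 1 ≤ j → t (j+1) x ≤ t j x := by
      intro j x hj
      rw [ht]; dsimp only
      rw [if_neg (by omega), if_neg (by omega)]
      apply max_le_max le_rfl
      have : (0:ℝ) ≤ infDist x F := infDist_nonneg
      push_cast; nlinarith
    -- telescoping bound
    have hQ : ∀ (x : K) (N : ℕ),
        (∑ j ∈ Finset.range N, |t (j+1) x - t j x|) + t N x ≤ 2 * t 1 x := by
      intro x N
      have h0 : t 0 x = 0 := by rw [ht]; simp
      have h1 : (0:ℝ) ≤ t 1 x := (ht01 1 x).1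
      induction N with
      | zero =>
        simp only [Finset.range_zero, Finset.sum_empty, zero_add, h0]
        linarith
      | succ N ih =>
        rw [Finset.sum_range_succ]
        rcases Nat.eq_zero_or_pos N with rfl | hN
        · have : |t 1 x - t 0 x| = t 1 x := by rw [h0, sub_zero, abs_of_nonneg h1]
          simp only [Nat.zero_add, Finset.range_zero, Finset.sum_empty, zero_add] at this ⊢
          rw [this, h0] at *
          linarith
        · have hdec : t (N+1) x ≤ t N x := hmono N x hN
          rw [abs_of_nonpos (by linarith)]
          linarith
    have hbound : ∀ (x : K) (J : Finset ℕ), ∑ j ∈ J, ‖Φ j x‖ ≤ 2 * ‖a‖ := by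
      intro x J
      have hnorm : ∀ j, ‖Φ j x‖ = ‖a‖ * |t (j+1) x - t j x| := by
        intro j
        rw [hΦ]; dsimp only
        rw [norm_mul, Complex.norm_real, Real.norm_eq_abs]
      rcases J.eq_empty_or_nonempty with rfl | hJne
      · simp
      · obtain ⟨N, hN⟩ := J.exists_nat_subset_range
        calc ∑ j ∈ J, ‖Φ j x‖ ≤ ∑ j ∈ Finset.range N, ‖Φ j x‖ :=
              Finset.sum_le_sum_of_subset_of_nonneg hN (fun _ _ _ => norm_nonneg _)
          _ = ‖a‖ * ∑ j ∈ Finset.range N, |t (j+1) x - t j x| := by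
              simp only [hnorm]; rw [Finset.mul_sum]
          _ ≤ ‖a‖ * (2 * t 1 x) := by
              apply mul_le_mul_of_nonneg_left _ (norm_nonneg a)
              have := hQ x N
              linarith [(ht01 N x).1]
          _ ≤ 2 * ‖a‖ := by
              have := (ht01 1 x).2
              have := (ht01 1 x).1
              nlinarith [norm_nonneg a]
    refine ⟨Φ, fun j => continuous_const.mul ((Complex.continuous_ofReal).comp
      ((htcont (j+1)).sub (htcont j))), ?_, hbound⟩
    intro x
    show HasSum (fun j => Φ j x) (if x ∈ F then a else 0)
    -- partial sums tendsto
    have hpartial : ∀ N, ∑ j ∈ Finset.range N, Φ j x = a * ((t N x : ℝ) : ℂ) := by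
      intro N
      have h1 : ∀ j, Φ j x = a * (((t (j+1) x : ℝ) : ℂ) - ((t j x : ℝ) : ℂ)) := by
        intro j; rw [hΦ]; push_cast; ring
      simp only [h1]
      rw [← Finset.mul_sum, Finset.sum_range_sub (fun j => ((t j x : ℝ) : ℂ))]
      have h0 : t 0 x = 0 := by rw [ht]; simp
      rw [h0]; push_cast; ring
    have hlim : Tendsto (fun N => ∑ j ∈ Finset.range N, Φ j x) atTop
        (𝓝 (if x ∈ F then a else 0)) := by
      simp only [hpartial]
      by_cases hx : x ∈ F
      · rw [if_pos hx]
        apply tendsto_atTop_of_eventually_const (i₀ := 1)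
        intro N hN
        have hd : infDist x F = 0 := infDist_zero_of_mem hx
        rw [ht]; dsimp only
        rw [if_neg (by omega), hd]
        norm_num
      · rw [if_neg hx]
        have hd : 0 < infDist x F := (hF.notMem_iff_infDist_pos hne).mp hx
        obtain ⟨N0, hN0⟩ := exists_nat_gt (1 / infDist x F)
        apply tendsto_atTop_of_eventually_const (i₀ := N0 + 1)
        intro N hN
        have hN' : 1 / infDist x F < N := lt_of_lt_of_le hN0 (by exact_mod_cast by omega)
        have : 1 - N * infDist x F ≤ 0 := by
          rw [div_lt_iff₀ hd] at hN'
          nlinarith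
        rw [ht]; dsimp only
        rw [if_neg (by omega), max_eq_left this]
        norm_num
    have hsummable : Summable (fun j => Φ j x) := by
      apply Summable.of_norm
      exact summable_of_sum_range_le (fun _ => norm_nonneg _)
        (fun n => hbound x (Finset.range n))
    have h2 := hsummable.hasSum
    have h3 := h2.tendsto_sum_nat
    have := tendsto_nhds_unique h3 hlim
    rwa [this] at h2

theorem goodRep_tsum (f : ℕ → K → ℂ) (Φ : ℕ → ℕ → K → ℂ) (c : ℕ → ℝ)
    (hrep : ∀ i, GoodRep (f i) (Φ i) (c i)) (hc : Summable c) (hc0 : ∀ i, 0 ≤ c i) :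
    ∃ Ψ, GoodRep (fun k => ∑' i, f i k) Ψ (∑' i, c i) := by
  classical
  set e : ℕ ≃ ℕ × ℕ := (Denumerable.eqv (ℕ × ℕ)).symm with he
  set Ψ : ℕ → K → ℂ := fun j k => Φ (e j).1 (e j).2 k with hΨ
  have pairBound : ∀ (k : K) (P : Finset (ℕ × ℕ)),
      ∑ p ∈ P, ‖Φ p.1 p.2 k‖ ≤ ∑' i, c i := by
    intro k P
    set A := P.image Prod.fst
    set B := P.image Prod.snd
    have hPsub : P ⊆ A ×ˢ B := by
      intro p hp
      exact Finset.mem_product.mpr ⟨Finset.mem_image_of_mem _ hp, Finset.mem_image_of_mem _ hp⟩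
    calc ∑ p ∈ P, ‖Φ p.1 p.2 k‖ ≤ ∑ p ∈ A ×ˢ B, ‖Φ p.1 p.2 k‖ :=
          Finset.sum_le_sum_of_subset_of_nonneg hPsub (fun _ _ _ => norm_nonneg _)
      _ = ∑ i ∈ A, ∑ j ∈ B, ‖Φ i j k‖ := by
          rw [Finset.sum_product]
      _ ≤ ∑ i ∈ A, c i := Finset.sum_le_sum (fun i _ => (hrep i).2.2 k B)
      _ ≤ ∑' i, c i := Summable.sum_le_tsum A (fun i _ => hc0 i) hc
  refine ⟨Ψ, fun j => (hrep (e j).1).1 (e j).2, ?_, ?_⟩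
  · intro k
    show HasSum (fun j => Ψ j k) (∑' i, f i k)
    have hnorm : Summable (fun p : ℕ × ℕ => ‖Φ p.1 p.2 k‖) :=
      summable_of_sum_le (fun p => norm_nonneg _) (pairBound k)
    have hpair : Summable (fun p : ℕ × ℕ => Φ p.1 p.2 k) := hnorm.of_norm
    have hfib : ∀ i, HasSum (fun j => Φ i j k) (f i k) := fun i => (hrep i).2.1 k
    have h1 : HasSum (fun i => f i k) (∑' p : ℕ × ℕ, Φ p.1 p.2 k) :=
      hpair.hasSum.prod_fiberwise hfib
    have h2 : (∑' i, f i k) = ∑' p : ℕ × ℕ, Φ p.1 p.2 k := h1.tsum_eq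
    have h3 : HasSum ((fun p : ℕ × ℕ => Φ p.1 p.2 k) ∘ e) (∑' p : ℕ × ℕ, Φ p.1 p.2 k) :=
      (Equiv.hasSum_iff e).mpr hpair.hasSum
    rw [h2]
    exact h3
  · intro k J
    have h1 : ∑ j ∈ J, ‖Ψ j k‖ = ∑ p ∈ J.image e, ‖Φ p.1 p.2 k‖ := by
      rw [Finset.sum_image (fun x _ y _ h => e.injective h)]
    rw [h1]
    exact pairBound k _
theorem isClosed_accSet (S : Set K) : IsClosed {x : K | AccPt x (𝓟 S)} := by
  rw [← isOpen_compl_iff, Metric.isOpen_iff]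
  intro x hx
  rw [mem_compl_iff, mem_setOf_eq, accPt_iff_nhds] at hx
  push_neg at hx
  obtain ⟨U, hU, hUx⟩ := hx
  obtain ⟨ε, hε, hball⟩ := Metric.mem_nhds_iff.mp hU
  refine ⟨ε/2, by linarith, ?_⟩
  intro w hw
  rw [mem_ball] at hw
  rw [mem_compl_iff, mem_setOf_eq, accPt_iff_nhds]
  push_neg
  by_cases hwx : w = x
  · subst hwx
    exact ⟨ball w ε, ball_mem_nhds w hε, fun y hy => hUx y ⟨hball hy.1, hy.2⟩⟩
  · have hdwx : 0 < dist w x := dist_pos.mpr hwx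
    refine ⟨ball w (min (ε - dist w x) (dist w x)),
      ball_mem_nhds w (lt_min (by linarith) hdwx), ?_⟩
    intro y hy
    exfalso
    have h1 : dist y w < ε - dist w x := lt_of_lt_of_le (mem_ball.mp hy.1) (min_le_left _ _)
    have h2 : dist y w < dist w x := lt_of_lt_of_le (mem_ball.mp hy.1) (min_le_right _ _)
    have h3 : y ∈ ball x ε := by
      rw [mem_ball]
      calc dist y x ≤ dist y w + dist w x := dist_triangle _ _ _
        _ < ε := by linarith
    have h4 : y = x := hUx y ⟨hball h3, hy.2⟩
    rw [h4] at h2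
    rw [dist_comm] at h2
    exact lt_irrefl _ h2

theorem isClosed_derivedIter (n : ℕ) : IsClosed (derivedIter K n) := by
  cases n with
  | zero => exact isClosed_univ
  | succ n => exact isClosed_accSet _

theorem derivedIter_succ_subset (n : ℕ) : derivedIter K (n+1) ⊆ derivedIter K n := by
  intro x hx
  have h1 : x ∈ closure (derivedIter K n) := by
    rw [mem_closure_iff_clusterPt]
    exact (hx : AccPt x (𝓟 (derivedIter K n))).clusterPt
  rwa [(isClosed_derivedIter n).closure_eq] at h1

theorem derivedIter_antitone {m n : ℕ} (h : m ≤ n) : derivedIter K n ⊆ derivedIter K m := by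
  induction n with
  | zero => rw [Nat.le_zero.mp h]
  | succ n ih =>
    rcases Nat.lt_or_ge m (n+1) with h' | h'
    · exact (derivedIter_succ_subset n).trans (ih (by omega))
    · have : m = n+1 := le_antisymm h h'
      rw [this]

theorem derivedIter_acc {x : K} {n : ℕ} (hx : x ∈ derivedIter K (n+1)) :
    ∀ ε : ℝ, 0 < ε → ∃ q, q ∈ derivedIter K n ∧ q ≠ x ∧ dist q x < ε := by
  intro ε hε
  have h1 := (accPt_iff_nhds (x := x) (C := derivedIter K n)).mp hx (ball x ε) (ball_mem_nhds x hε)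
  obtain ⟨y, ⟨hy1, hy2⟩, hy3⟩ := h1
  exact ⟨y, hy2, hy3, mem_ball.mp hy1⟩

theorem closed_shrinking_union (p : K) (G : ℕ → Set K)
    (hG : ∀ m, IsClosed (G m))
    (htail : ∀ ε : ℝ, 0 < ε → ∃ M, ∀ m, M ≤ m → G m ⊆ ball p ε) :
    IsClosed ({p} ∪ ⋃ m, G m) := by
  rw [← isOpen_compl_iff, Metric.isOpen_iff]
  intro x hx
  simp only [mem_compl_iff, mem_union, mem_singleton_iff, mem_iUnion, not_or,
    not_exists] at hx
  obtain ⟨hxp, hxG⟩ := hx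
  have hε : 0 < dist x p := dist_pos.mpr hxp
  obtain ⟨M, hM⟩ := htail (dist x p / 2) (by linarith)
  have hA : IsClosed ({p} ∪ ⋃ m ∈ Finset.range M, G m) :=
    IsClosed.union isClosed_singleton
      (((Finset.range M).finite_toSet).isClosed_biUnion (fun m _ => hG m))
  have hxA : x ∉ ({p} ∪ ⋃ m ∈ Finset.range M, G m) := by
    simp only [mem_union, mem_singleton_iff, mem_iUnion, not_or, not_exists]
    exact ⟨hxp, fun m _ => hxG m⟩
  obtain ⟨r1, hr1, hball⟩ := Metric.isOpen_iff.mp hA.isOpen_compl x hxA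
  refine ⟨min r1 (dist x p / 2), lt_min hr1 (by linarith), ?_⟩
  intro w hw
  rw [mem_ball] at hw
  have hw1 : w ∈ ball x r1 := mem_ball.mpr (lt_of_lt_of_le hw (min_le_left _ _))
  have hw2 : dist w x < dist x p / 2 := lt_of_lt_of_le hw (min_le_right _ _)
  have hwA := hball hw1
  simp only [mem_compl_iff, mem_union, mem_singleton_iff, mem_iUnion, not_or,
    not_exists] at hwA ⊢
  refine ⟨hwA.1, fun m => ?_⟩
  rcases Nat.lt_or_ge m M with hm | hm
  · exact hwA.2 m (Finset.mem_range.mpr hm)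
  · intro hwG
    have h1 : w ∈ ball p (dist x p / 2) := hM m hm hwG
    rw [mem_ball] at h1
    have : dist x p ≤ dist x w + dist w p := dist_triangle _ _ _
    rw [dist_comm x w] at this
    linarith

theorem shrink (p : K) (s : ℕ → Set K)
    (hs : ∀ (m : ℕ) (ε : ℝ), 0 < ε → ∃ q, q ∈ s m ∧ q ≠ p ∧ dist q p < ε)
    (r : ℝ) (hr : 0 < r) :
    ∃ y : ℕ → K, (∀ m, y m ∈ s m) ∧ (∀ m, 0 < dist (y m) p) ∧
      (∀ m, dist (y m) p < r) ∧ (∀ m, dist (y (m+1)) p < dist (y m) p / 4) := by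
  choose Q hQ1 hQ2 hQ3 using hs
  have hstep : ∀ (prev : {q : K // 0 < dist q p}), 0 < dist prev.1 p / 4 :=
    fun prev => by have := prev.2; linarith
  set Y : ℕ → {q : K // 0 < dist q p} :=
    fun m => Nat.rec (motive := fun _ => {q : K // 0 < dist q p})
      ⟨Q 0 r hr, dist_pos.mpr (hQ2 0 r hr)⟩
      (fun m prev => ⟨Q (m+1) (dist prev.1 p / 4) (hstep prev),
        dist_pos.mpr (hQ2 (m+1) _ (hstep prev))⟩) m with hY
  have hY0 : Y 0 = ⟨Q 0 r hr, dist_pos.mpr (hQ2 0 r hr)⟩ := rfl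
  have hYsucc : ∀ m, Y (m+1) = ⟨Q (m+1) (dist (Y m).1 p / 4) (hstep (Y m)),
      dist_pos.mpr (hQ2 (m+1) _ (hstep (Y m)))⟩ := fun m => rfl
  have hlt : ∀ m, dist ((Y (m+1)).1) p < dist (Y m).1 p / 4 := by
    intro m
    rw [hYsucc m]
    exact hQ3 (m+1) _ (hstep (Y m))
  have hr' : ∀ m, dist (Y m).1 p < r := by
    intro m
    induction m with
    | zero => rw [hY0]; exact hQ3 0 r hr
    | succ m ih =>
      have := hlt m
      linarith
  refine ⟨fun m => (Y m).1, ?_, fun m => (Y m).2, hr', hlt⟩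
  intro m
  show (Y m).1 ∈ s m
  cases m with
  | zero => rw [hY0]; exact hQ1 0 r hr
  | succ m => rw [hYsucc m]; exact hQ1 (m+1) _ _

theorem nested_antitone {F : ℕ → Set K} (h : ∀ j, F (j+1) ⊆ F j) {i j : ℕ} (hij : i ≤ j) :
    F j ⊆ F i := by
  induction j with
  | zero => rw [Nat.le_zero.mp hij]
  | succ j ih =>
    rcases Nat.lt_or_ge i (j+1) with h' | h'
    · exact (h j).trans (ih (by omega))
    · rw [le_antisymm hij h']

/-- The tree construction. -/
theorem tree : ∀ (n : ℕ) (y : K), y ∈ derivedIter K n → ∀ r : ℝ, 0 < r →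
    ∃ F : ℕ → Set K,
      (∀ j, IsClosed (F j)) ∧
      (∀ j, F (j+1) ⊆ F j) ∧
      (F 0 ⊆ ball y r) ∧
      (F (n+1) = ∅) ∧
      (y ∈ F n) ∧
      (∀ (g : K → ℂ) (δ : ℝ),
        (∀ a, a ∈ F 0 → ∀ b, b ∈ F 0 → ∀ la lb : ℕ,
          a ∈ F la → a ∉ F (la+1) → b ∈ F lb → b ∉ F (lb+1) →
          (Odd la ↔ ¬ Odd lb) → δ ≤ dist (g a) (g b)) →
        chain g δ n y) := by
  intro n
  induction n with
  | zero =>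
    intro y _ r hr
    refine ⟨fun j => if j = 0 then {y} else ∅, ?_, ?_, ?_, ?_, ?_, ?_⟩
    · intro j
      show IsClosed (if j = 0 then ({y} : Set K) else ∅)
      split
      · exact isClosed_singleton
      · exact isClosed_empty
    · intro j
      show (if j + 1 = 0 then ({y} : Set K) else ∅) ⊆ _
      rw [if_neg (by omega)]; exact empty_subset _
    · show (if (0:ℕ) = 0 then ({y} : Set K) else ∅) ⊆ ball y r
      rw [if_pos rfl]
      intro x hx
      rw [mem_singleton_iff] at hx
      subst hx
      exact mem_ball_self hr
    · show (if (0:ℕ) + 1 = 0 then ({y} : Set K) else ∅) = ∅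
      rw [if_neg (by omega)]
    · show y ∈ (if (0:ℕ) = 0 then ({y} : Set K) else ∅)
      rw [if_pos rfl]; exact rfl
    · intro g δ _; trivial
  | succ n IH =>
    intro y hy r hr
    obtain ⟨ys, hmem, hpos, hltr, hdec⟩ :=
      shrink y (fun _ => derivedIter K n) (fun _ => derivedIter_acc hy) (r/2) (by linarith)
    set d : ℕ → ℝ := fun m => dist (ys m) y with hd
    choose Fm h1 h2 h3 h4 h5 h6 using
      fun m => IH (ys m) (hmem m) (d m / 4) (by have := hpos m; simp only [hd]; linarith)
    -- monotonicity of the nested families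
    have hFmono : ∀ (m : ℕ) {i j : ℕ}, i ≤ j → Fm m j ⊆ Fm m i := by
      intro m i j hij
      induction j with
      | zero => rw [Nat.le_zero.mp hij]
      | succ j ih =>
        rcases Nat.lt_or_ge i (j+1) with h' | h'
        · exact (h2 m j).trans (ih (by omega))
        · rw [le_antisymm hij h']
    have hFall : ∀ (m j : ℕ), n+1 ≤ j → Fm m j = ∅ := by
      intro m j hj
      apply eq_empty_of_subset_empty
      rw [← h4 m]
      exact hFmono m hj
    -- distance estimates
    have hI : ∀ (m j : ℕ) (x : K), x ∈ Fm m j → dist x (ys m) < d m / 4 :=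
      fun m j x hx => mem_ball.mp (h3 m (hFmono m (Nat.zero_le j) hx))
    have hII : ∀ (m j : ℕ) (x : K), x ∈ Fm m j → (3/4) * d m ≤ dist x y := by
      intro m j x hx
      have h0 := hI m j x hx
      have h1' : d m ≤ dist (ys m) x + dist x y := by
        rw [hd]; exact dist_triangle _ _ _
      rw [dist_comm] at h0
      linarith
    have hney : ∀ (m j : ℕ) (x : K), x ∈ Fm m j → x ≠ y := by
      intro m j x hx hxy
      have := hII m j x hx
      rw [hxy, dist_self] at this
      have := hpos m
      simp only [hd] at *
      linarith
    have hdmono : ∀ {m m' : ℕ}, m ≤ m' → d m' ≤ d m := by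
      intro m m' h
      induction m' with
      | zero => rw [Nat.le_zero.mp h]
      | succ m' ih =>
        rcases Nat.lt_or_ge m (m'+1) with h' | h'
        · have := hdec m'
          have := ih (by omega)
          simp only [hd] at *
          linarith [dist_nonneg (x := ys (m'+1)) (y := y)]
        · rw [le_antisymm h h']
    have hd4 : ∀ {m m' : ℕ}, m < m' → d m' < d m / 4 := by
      intro m m' h
      have h0 : d m' ≤ d (m+1) := hdmono h
      have := hdec m
      linarith
    -- disjointness
    have hdisj : ∀ {m m' : ℕ}, m ≠ m' → ∀ x, x ∈ Fm m 0 → x ∉ Fm m' 0 := by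
      have key : ∀ {m m' : ℕ}, m < m' → ∀ x, x ∈ Fm m 0 → x ∉ Fm m' 0 := by
        intro m m' h x hx hx'
        have e1 := hI m 0 x hx
        have e2 := hI m' 0 x hx'
        have e3 : d m - d m' ≤ dist (ys m) (ys m') := by
          have := dist_triangle (ys m) (ys m') y
          have h5' : dist (ys m') y = d m' := rfl
          simp only [hd] at *
          linarith
        have e4 : dist (ys m) (ys m') ≤ dist x (ys m) + dist x (ys m') := by
          rw [dist_comm x (ys m)]
          exact dist_triangle _ _ _
        have e5 := hd4 h
        have e6 := hpos m
        simp only [hd] at *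
        linarith
      intro m m' h x hx hx'
      rcases Nat.lt_or_ge m m' with h' | h'
      · exact key h' x hx hx'
      · exact key (by omega) x hx' hx
    -- the new family
    set F' : ℕ → Set K :=
      fun j => (if j ≤ n+1 then ({y} : Set K) else ∅) ∪ ⋃ m, Fm m j with hF'
    -- small-d extraction
    have hdsmall : ∀ ε : ℝ, 0 < ε → ∃ M : ℕ, ∀ m, M ≤ m → d m < ε := by
      intro ε hε
      have hgeo : ∀ m : ℕ, d m ≤ d 0 * (1/4)^m := by
        intro m
        induction m with
        | zero => simp
        | succ m ih =>
          have := hdec m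
          have h40 : (0:ℝ) < (1/4)^m := by positivity
          calc d (m+1) ≤ d m / 4 := by linarith
            _ ≤ (d 0 * (1/4)^m) / 4 := by linarith
            _ = d 0 * (1/4)^(m+1) := by ring
      have hd0 : 0 < d 0 := hpos 0
      obtain ⟨M, hM⟩ := exists_pow_lt_of_lt_one (show (0:ℝ) < ε / d 0 by positivity)
        (show (1/4 : ℝ) < 1 by norm_num)
      refine ⟨M, fun m hm => ?_⟩
      calc d m ≤ d M := hdmono hm
        _ ≤ d 0 * (1/4)^M := hgeo M
        _ < d 0 * (ε / d 0) := by
            apply mul_lt_mul_of_pos_left hM hd0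
        _ = ε := by field_simp
    -- memberships in F'
    have hymem : ∀ j, j ≤ n+1 → y ∈ F' j := by
      intro j hj
      left
      rw [if_pos hj]
      exact rfl
    have hsubmem : ∀ m j (x : K), x ∈ Fm m j → x ∈ F' j := by
      intro m j x hx
      right
      exact mem_iUnion.mpr ⟨m, hx⟩
    have hnotmem : ∀ (m : ℕ) (x : K), x ∈ Fm m 0 → ∀ j, x ∉ Fm m (j+1) → x ∉ F' (j+1) := by
      intro m x hx j hxj
      intro hmem'
      rcases hmem' with hl | hr
      · have : x = y := by
          by_cases hc : j+1 ≤ n+1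
          · rw [if_pos hc] at hl; exact hl
          · rw [if_neg hc] at hl; exact absurd hl (notMem_empty x)
        exact (hney m 0 x hx) this
      · obtain ⟨m', hm'⟩ := mem_iUnion.mp hr
        by_cases hmm : m' = m
        · subst hmm; exact hxj hm'
        · exact hdisj (fun h => hmm h.symm) x hx (hFmono m' (Nat.zero_le _) hm')
    refine ⟨F', ?_, ?_, ?_, ?_, ?_, ?_⟩
    · -- closedness
      intro j
      by_cases hj : j ≤ n+1
      · rw [hF']
        simp only [if_pos hj]
        apply closed_shrinking_union y (fun m => Fm m j) (fun m => h1 m j)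
        intro ε hε
        obtain ⟨M, hM⟩ := hdsmall (ε * (4/5)) (by linarith)
        refine ⟨M, fun m hm x hx => ?_⟩
        rw [mem_ball]
        calc dist x y ≤ dist x (ys m) + dist (ys m) y := dist_triangle _ _ _
          _ < d m / 4 + d m := by
              have := hI m j x hx
              simp only [hd] at *
              linarith
          _ = (5/4) * d m := by ring
          _ < (5/4) * (ε * (4/5)) := by
              have := hM m hm
              nlinarith [hpos m, hdmono hm]
          _ = ε := by ring
      · have hempty : F' j = ∅ := by
          rw [hF']
          simp only [if_neg hj]
          rw [empty_union]
          apply eq_empty_of_subset_empty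
          intro x hx
          obtain ⟨m, hm⟩ := mem_iUnion.mp hx
          rw [hFall m j (by omega)] at hm
          exact hm
        rw [hempty]
        exact isClosed_empty
    · -- nested
      intro j
      intro x hx
      rcases hx with hl | hr
      · left
        by_cases hc : j+1 ≤ n+1
        · rw [if_pos hc] at hl
          rw [if_pos (by omega)]
          exact hl
        · rw [if_neg hc] at hl
          exact absurd hl (notMem_empty x)
      · right
        obtain ⟨m, hm⟩ := mem_iUnion.mp hr
        exact mem_iUnion.mpr ⟨m, h2 m j hm⟩
    · -- inside ball y r
      intro x hx
      rcases hx with hl | hr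
      · rw [if_pos (by omega)] at hl
        rw [mem_singleton_iff] at hl
        subst hl
        exact mem_ball_self hr
      · obtain ⟨m, hm⟩ := mem_iUnion.mp hr
        rw [mem_ball]
        calc dist x y ≤ dist x (ys m) + dist (ys m) y := dist_triangle _ _ _
          _ < d m / 4 + d m := by
              have := hI m 0 x hm
              simp only [hd] at *
              linarith
          _ = (5/4) * d m := by ring
          _ < (5/4) * (r/2) := by
              have := hltr m
              nlinarith [hpos m]
          _ < r := by linarith
    · -- F' (n+2) = ∅
      apply eq_empty_of_subset_empty
      intro x hx
      rcases hx with hl | hr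
      · rw [if_neg (by omega)] at hl
        exact hl
      · obtain ⟨m, hm⟩ := mem_iUnion.mp hr
        rw [hFall m (n+2) (by omega)] at hm
        exact hm
    · -- y ∈ F' (n+1)
      exact hymem (n+1) le_rfl
    · -- chain
      intro g δ H
      show chain g δ (n+1) y
      intro ε hε
      obtain ⟨M, hM⟩ := hdsmall ε hε
      refine ⟨ys M, hM M le_rfl, ?_, ?_⟩
      · -- chain g δ n (ys M)
        apply h6 M g δ
        intro a ha b hb la lb hala hala' halb halb' hpar
        have ha0 : a ∈ Fm M 0 := hFmono M (Nat.zero_le _) ha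
        have hb0 : b ∈ Fm M 0 := hFmono M (Nat.zero_le _) hb
        exact H a (hsubmem M 0 a ha0) b (hsubmem M 0 b hb0) la lb
          (hsubmem M la a hala) (hnotmem M a ha0 la hala')
          (hsubmem M lb b halb) (hnotmem M b hb0 lb halb') hpar
      · -- value clause
        have hysM0 : ys M ∈ Fm M 0 := hFmono M (Nat.zero_le n) (h5 M)
        apply H (ys M) (hsubmem M 0 _ hysM0) y (hymem 0 (by omega)) n (n+1)
          (hsubmem M n _ (h5 M))
          (hnotmem M (ys M) hysM0 n (by rw [hFall M (n+1) le_rfl]; exact notMem_empty _))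
          (hymem (n+1) le_rfl)
        · -- y ∉ F' (n+2)
          intro hmem'
          rcases hmem' with hl | hr
          · rw [if_neg (by omega)] at hl
            exact hl
          · obtain ⟨m, hm⟩ := mem_iUnion.mp hr
            rw [hFall m (n+2) (by omega)] at hm
            exact hm
        · rw [Nat.odd_add_one, not_not]
theorem sites (hK : ∀ n : ℕ, 0 < n → (derivedIter K n).Nonempty) (N : ℕ → ℕ) :
    ∃ (y : ℕ → K) (r : ℕ → ℝ), (∀ i, 0 < r i) ∧ (∀ i, y i ∈ derivedIter K (N i)) ∧
      (∀ i j, i ≠ j → ∀ x, x ∈ closedBall (y i) (r i) → x ∉ closedBall (y j) (r j)) := by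
  by_cases hA : ∃ x : K, ∀ n, x ∈ derivedIter K n
  · -- Case A : a point of infinite rank
    obtain ⟨x, hx⟩ := hA
    have hs : ∀ (i : ℕ) (ε : ℝ), 0 < ε →
        ∃ q, q ∈ derivedIter K (N i) ∧ q ≠ x ∧ dist q x < ε :=
      fun i => derivedIter_acc (hx (N i + 1))
    obtain ⟨ys, hmem, hpos, _, hdec⟩ := shrink x _ hs 1 one_pos
    set d : ℕ → ℝ := fun m => dist (ys m) x with hd
    have hdmono : ∀ {m m' : ℕ}, m ≤ m' → d m' ≤ d m := by
      intro m m' h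
      induction m' with
      | zero => rw [Nat.le_zero.mp h]
      | succ m' ih =>
        rcases Nat.lt_or_ge m (m'+1) with h' | h'
        · have := hdec m'
          have := ih (by omega)
          have := hpos (m'+1)
          simp only [hd] at *
          linarith
        · rw [le_antisymm h h']
    have hd4 : ∀ {m m' : ℕ}, m < m' → d m' < d m / 4 := by
      intro m m' h
      have h0 : d m' ≤ d (m+1) := hdmono h
      have := hdec m
      linarith
    refine ⟨ys, fun i => d i / 4, fun i => by have := hpos i; simp only [hd]; linarith,
      hmem, ?_⟩
    have key : ∀ {i j : ℕ}, i < j → ∀ z, z ∈ closedBall (ys i) (d i / 4) →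
        z ∉ closedBall (ys j) (d j / 4) := by
      intro i j hij z hz hz'
      rw [mem_closedBall] at hz hz'
      have e3 : d i - d j ≤ dist (ys i) (ys j) := by
        have := dist_triangle (ys i) (ys j) x
        simp only [hd] at *
        linarith
      have e4 : dist (ys i) (ys j) ≤ dist z (ys i) + dist z (ys j) := by
        rw [dist_comm z (ys i)]
        exact dist_triangle _ _ _
      have e5 := hd4 hij
      have e6 := hpos i
      simp only [hd] at *
      linarith
    intro i j hij z hz
    rcases Nat.lt_or_ge i j with h' | h'
    · exact key h' z hz
    · intro hz'
      exact key (by omega) z hz' hz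
  · -- Case B : every point has finite rank
    push_neg at hA
    -- invariant
    set Inv : ℕ → K × ℝ × ℕ → Prop := fun i v =>
      v.1 ∈ derivedIter K (N i) ∧ 0 < v.2.1 ∧ 1 ≤ v.2.2 ∧
        ∀ q ∈ derivedIter K v.2.2, q ∉ closedBall v.1 (2 * v.2.1) with hInv
    -- auxiliary: given a center avoid set, produce radius
    have mkRad : ∀ (p : K) (n0 : ℕ), p ∉ derivedIter K n0 →
        ∃ ε : ℝ, 0 < ε ∧ ∀ q ∈ derivedIter K n0, q ∉ closedBall p (2 * (ε/3)) := by
      intro p n0 hp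
      obtain ⟨ε, hε, hball⟩ := Metric.isOpen_iff.mp (isClosed_derivedIter n0).isOpen_compl p hp
      refine ⟨ε, hε, fun q hq hq' => ?_⟩
      rw [mem_closedBall] at hq'
      have : q ∈ ball p ε := mem_ball.mpr (by rw [dist_comm] at hq' ⊢; linarith)
      exact (hball this) hq
    have ex : ∀ (i : ℕ) (v : K × ℝ × ℕ), Inv i v →
        ∃ v' : K × ℝ × ℕ, Inv (i+1) v' ∧ v'.2.1 ≤ v.2.1 ∧ v.2.2 ≤ v'.2.2 ∧
          v'.1 ∈ derivedIter K v.2.2 := by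
      intro i v hv
      obtain ⟨hv1, hv2, hv3, hv4⟩ := hv
      set L := max (N (i+1)) v.2.2 with hL
      obtain ⟨y', hy'⟩ := hK L (by omega)
      obtain ⟨m, hm⟩ := hA y'
      set M' := max m (max v.2.2 1) with hM'
      have hy'M : y' ∉ derivedIter K M' := fun h =>
        hm (derivedIter_antitone (le_max_left _ _) h)
      obtain ⟨ε, hε, hrad⟩ := mkRad y' M' hy'M
      refine ⟨(y', min (ε/3) v.2.1, M'), ⟨?_, ?_, ?_, ?_⟩, ?_, ?_, ?_⟩
      · exact derivedIter_antitone (le_max_left _ _) hy'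
      · exact lt_min (by linarith) hv2
      · simp only [hM']; omega
      · intro q hq hq'
        apply hrad q hq
        rw [mem_closedBall] at hq' ⊢
        have : min (ε/3) v.2.1 ≤ ε/3 := min_le_left _ _
        linarith
      · exact min_le_right _ _
      · simp only [hM']; omega
      · exact derivedIter_antitone (le_max_right _ _) hy'
    -- base
    have base : ∃ v : K × ℝ × ℕ, Inv 0 v := by
      obtain ⟨y0, hy0⟩ := hK (max (N 0) 1) (by omega)
      obtain ⟨m, hm⟩ := hA y0
      set M0 := max m 1 with hM0
      have hy0M : y0 ∉ derivedIter K M0 := fun h =>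
        hm (derivedIter_antitone (le_max_left _ _) h)
      obtain ⟨ε, hε, hrad⟩ := mkRad y0 M0 hy0M
      exact ⟨(y0, ε/3, M0), derivedIter_antitone (le_max_left _ _) hy0,
        by linarith, by show 1 ≤ max m 1; omega, hrad⟩
    -- the recursive sequence
    set seq : ∀ i : ℕ, {v : K × ℝ × ℕ // Inv i v} :=
      fun i => Nat.rec (motive := fun i => {v : K × ℝ × ℕ // Inv i v})
        ⟨base.choose, base.choose_spec⟩
        (fun i prev => ⟨(ex i prev.1 prev.2).choose, (ex i prev.1 prev.2).choose_spec.1⟩) i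
      with hseq
    have hrel : ∀ i : ℕ, (seq (i+1)).1.2.1 ≤ (seq i).1.2.1 ∧
        (seq i).1.2.2 ≤ (seq (i+1)).1.2.2 ∧
        (seq (i+1)).1.1 ∈ derivedIter K (seq i).1.2.2 := by
      intro i
      have h0 : seq (i+1) = ⟨(ex i (seq i).1 (seq i).2).choose,
          (ex i (seq i).1 (seq i).2).choose_spec.1⟩ := rfl
      rw [h0]
      exact ⟨(ex i (seq i).1 (seq i).2).choose_spec.2.1,
        (ex i (seq i).1 (seq i).2).choose_spec.2.2.1,
        (ex i (seq i).1 (seq i).2).choose_spec.2.2.2⟩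
    set y : ℕ → K := fun i => (seq i).1.1 with hy
    set r : ℕ → ℝ := fun i => (seq i).1.2.1 with hr
    set M : ℕ → ℕ := fun i => (seq i).1.2.2 with hM
    have hinv : ∀ i, y i ∈ derivedIter K (N i) ∧ 0 < r i ∧ 1 ≤ M i ∧
        ∀ q ∈ derivedIter K (M i), q ∉ closedBall (y i) (2 * r i) := fun i => (seq i).2
    have hrmono : ∀ {i j : ℕ}, i ≤ j → r j ≤ r i := by
      intro i j h
      induction j with
      | zero => rw [Nat.le_zero.mp h]
      | succ j ih =>
        rcases Nat.lt_or_ge i (j+1) with h' | h'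
        · exact le_trans (hrel j).1 (ih (by omega))
        · rw [le_antisymm h h']
    have hMmono : ∀ {i j : ℕ}, i ≤ j → M i ≤ M j := by
      intro i j h
      induction j with
      | zero => rw [Nat.le_zero.mp h]
      | succ j ih =>
        rcases Nat.lt_or_ge i (j+1) with h' | h'
        · exact le_trans (ih (by omega)) (hrel j).2.1
        · rw [le_antisymm h h']
    have hyM : ∀ {i j : ℕ}, i < j → y j ∈ derivedIter K (M i) := by
      intro i j h
      rcases Nat.exists_eq_add_of_lt h with ⟨k, rfl⟩
      have h1 : y (i+k+1) ∈ derivedIter K (M (i+k)) := (hrel (i+k)).2.2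
      exact derivedIter_antitone (hMmono (by omega)) h1
    refine ⟨y, r, fun i => (hinv i).2.1, fun i => (hinv i).1, ?_⟩
    have key : ∀ {i j : ℕ}, i < j → ∀ z, z ∈ closedBall (y i) (r i) →
        z ∉ closedBall (y j) (r j) := by
      intro i j hij z hz hz'
      rw [mem_closedBall] at hz hz'
      have h1 : y j ∉ closedBall (y i) (2 * r i) := (hinv i).2.2.2 (y j) (hyM hij)
      rw [mem_closedBall] at h1
      push_neg at h1
      have h2 : dist (y j) (y i) ≤ dist z (y j) + dist z (y i) := by
        rw [dist_comm z (y j)]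
        exact dist_triangle _ _ _
      have h3 : r j ≤ r i := hrmono (le_of_lt hij)
      linarith
    intro i j hij z hz
    rcases Nat.lt_or_ge i j with h' | h'
    · exact key h' z hz
    · intro hz'
      exact key (by omega) z hz' hz
/-- The main construction: a `D`-function with deep oscillation chains. -/
theorem construct (hK : ∀ n : ℕ, 0 < n → (derivedIter K n).Nonempty)
    (z w : ℕ → ℂ) (w0 : ℂ) (nn : ℕ → ℕ)
    (hsum : Summable (fun i => 2 * ‖w i - w0‖ + 2 * ((nn i : ℝ) + 1) * ‖z i - w i‖)) :
    ∃ f : K → ℂ, MemD f ∧ ∀ i, ∃ x : K,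
      f x = (if Odd (nn i) then z i else w i) ∧
      ∀ ψ : ℂ → ℂ, chain (fun k => ψ (f k)) (dist (ψ (z i)) (ψ (w i))) (nn i) x := by
  obtain ⟨y, r, hrpos, hymem, hballs⟩ := sites hK nn
  choose F hF1 hF2 hF3 hF4 hF5 hF6 using fun i => tree (nn i) (y i) (hymem i) (r i) (hrpos i)
  have hdisj : ∀ {i j : ℕ}, i ≠ j → ∀ a, a ∈ F i 0 → a ∉ F j 0 := by
    intro i j hij a ha ha'
    exact hballs i j hij a (ball_subset_closedBall (hF3 i ha))
      (ball_subset_closedBall (hF3 j ha'))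
  set coef : ℕ → ℕ → ℂ := fun i l =>
    if l = 0 then w i - w0 else if l ≤ nn i then (-1)^(l+1) * (z i - w i) else 0 with hcoef
  set gsite : ℕ → K → ℂ := fun i k => ∑' l, (if k ∈ F i l then coef i l else 0) with hgsite
  set G : ℕ → K → ℂ := fun i' => Nat.casesOn i' (fun _ => w0) (fun i => gsite i) with hG
  set f : K → ℂ := fun k => ∑' i', G i' k with hf
  have hcoef0 : ∀ i, coef i 0 = w i - w0 := by
    intro i; simp [hcoef]
  have hcoefnorm : ∀ i l, 1 ≤ l → l ≤ nn i → coef i l = (-1)^(l+1) * (z i - w i) := by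
    intro i l h1 h2
    simp only [hcoef]
    rw [if_neg (by omega), if_pos h2]
  have hcoefzero : ∀ i l, nn i + 1 ≤ l → coef i l = 0 := by
    intro i l hl
    simp only [hcoef]
    rw [if_neg (by omega), if_neg (by omega)]
  have hnormpow : ∀ (i e : ℕ), ‖((-1:ℂ))^e * (z i - w i)‖ = ‖z i - w i‖ := by
    intro i e
    rw [norm_mul, norm_pow, norm_neg, norm_one, one_pow, one_mul]
  -- GoodRep of each site function
  have hsite : ∀ i : ℕ, ∃ Ψ, GoodRep (gsite i) Ψ
      (2 * ‖w i - w0‖ + 2 * ((nn i : ℝ) + 1) * ‖z i - w i‖) := by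
    intro i
    choose Φil hΦil using fun l => goodRep_indicator (F i l) (hF1 i l) (coef i l)
    have hcsupp : ∀ l ∉ Finset.range (nn i + 1), 2 * ‖coef i l‖ = 0 := by
      intro l hl
      rw [Finset.mem_range, not_lt] at hl
      rw [hcoefzero i l hl]
      simp
    have hcsum : Summable (fun l => 2 * ‖coef i l‖) := summable_of_ne_finset_zero hcsupp
    obtain ⟨Ψ, hΨ⟩ := goodRep_tsum _ Φil _ hΦil hcsum (fun l => by positivity)
    refine ⟨Ψ, hΨ.mono ?_⟩
    rw [tsum_eq_sum hcsupp, Finset.sum_range_succ']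
    rw [hcoef0 i]
    have htermb : ∀ l ∈ Finset.range (nn i), 2 * ‖coef i (l+1)‖ ≤ 2 * ‖z i - w i‖ := by
      intro l hl
      rw [Finset.mem_range] at hl
      rw [hcoefnorm i (l+1) (by omega) (by omega), hnormpow i (l+1+1)]
    have hsum1 := Finset.sum_le_sum htermb
    rw [Finset.sum_const, Finset.card_range, nsmul_eq_mul] at hsum1
    have h0 : (0:ℝ) ≤ ‖z i - w i‖ := norm_nonneg _
    have h1 : (nn i : ℝ) ≤ (nn i : ℝ) + 1 := by linarith
    nlinarith
  choose Ψs hΨs using hsite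
  set C : ℕ → ℝ := fun i' => Nat.casesOn i' ‖w0‖
    (fun i => 2 * ‖w i - w0‖ + 2 * ((nn i : ℝ) + 1) * ‖z i - w i‖) with hC
  have hCrep : ∀ i', ∃ Φ', GoodRep (G i') Φ' (C i') := by
    intro i'
    match i' with
    | 0 => exact ⟨_, goodRep_const w0⟩
    | (i+1) => exact ⟨Ψs i, hΨs i⟩
  choose Φout hΦout using hCrep
  have hCsum : Summable C := by
    rw [← summable_nat_add_iff 1]
    exact hsum
  have hC0 : ∀ i', 0 ≤ C i' := by
    intro i'
    match i' with
    | 0 => exact norm_nonneg _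
    | (i+1) => show (0:ℝ) ≤ 2 * ‖w i - w0‖ + 2 * ((nn i : ℝ) + 1) * ‖z i - w i‖; positivity
  obtain ⟨Ψ, hΨ⟩ := goodRep_tsum G Φout C hΦout hCsum hC0
  -- evaluation lemma
  have hEval : ∀ (i l : ℕ) (k : K), k ∈ F i l → k ∉ F i (l+1) →
      f k = if Odd l then z i else w i := by
    intro i l k hkl hkl'
    have hlle : l ≤ nn i := by
      by_contra hc
      have h1 : k ∈ F i (nn i + 1) := nested_antitone (hF2 i) (by omega) hkl
      rw [hF4 i] at h1
      exact h1
    have hk0 : k ∈ F i 0 := nested_antitone (hF2 i) (Nat.zero_le l) hkl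
    have hmemiff : ∀ j, k ∈ F i j ↔ j ≤ l := by
      intro j
      constructor
      · intro hj
        by_contra hc
        exact hkl' (nested_antitone (hF2 i) (by omega) hj)
      · intro hj
        exact nested_antitone (hF2 i) hj hkl
    have hsign : ∀ L : ℕ, L ≤ nn i →
        (∑ l' ∈ Finset.range (L+1), coef i l')
          = (w i - w0) + (if Odd L then z i - w i else 0) := by
      intro L
      induction L with
      | zero =>
        intro _
        rw [Finset.sum_range_one, hcoef0 i, if_neg (by decide : ¬ Odd 0), add_zero]
      | succ L ih =>
        intro hL
        rw [Finset.sum_range_succ, ih (by omega),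
          hcoefnorm i (L+1) (by omega) (by omega)]
        by_cases hodd : Odd L
        · rw [if_pos hodd, if_neg (by rw [Nat.odd_add_one]; exact not_not.mpr hodd)]
          have hodd2 : Odd (L+1+1) := by
            rcases hodd with ⟨k, hk⟩; exact ⟨k+1, by omega⟩
          have he : ((-1:ℂ))^(L+1+1) = -1 := hodd2.neg_one_pow
          rw [he]; ring
        · rw [if_neg hodd, if_pos (by rw [Nat.odd_add_one]; exact hodd)]
          have heven2 : Even (L+1+1) := by
            have h2 : Even L := Nat.not_odd_iff_even.mp hodd
            rcases h2 with ⟨k, hk⟩; exact ⟨k+1, by omega⟩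
          have he : ((-1:ℂ))^(L+1+1) = 1 := heven2.neg_one_pow
          rw [he]; ring
    have hgsitei : gsite i k = (w i - w0) + (if Odd l then z i - w i else 0) := by
      have hsupp : ∀ l' ∉ Finset.range (l+1), (if k ∈ F i l' then coef i l' else 0) = 0 := by
        intro l' hl'
        rw [Finset.mem_range, not_lt] at hl'
        exact if_neg (fun hmem => absurd ((hmemiff l').mp hmem) (by omega))
      show (∑' l', (if k ∈ F i l' then coef i l' else 0)) = _
      rw [tsum_eq_sum hsupp]
      rw [Finset.sum_congr rfl (fun l' hl' =>
        if_pos ((hmemiff l').mpr (by rw [Finset.mem_range] at hl'; omega)))]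
      exact hsign l hlle
    have hgsitej : ∀ i', i' ≠ i → gsite i' k = 0 := by
      intro i' hij
      show (∑' l', (if k ∈ F i' l' then coef i' l' else 0)) = 0
      have : ∀ l', (if k ∈ F i' l' then coef i' l' else 0) = 0 := fun l' =>
        if_neg (fun hc => hdisj (fun h => hij h.symm) k hk0
          (nested_antitone (hF2 i') (Nat.zero_le _) hc))
      rw [tsum_congr this, tsum_zero]
    have hsuppf : ∀ i' ∉ ({0, i+1} : Finset ℕ), G i' k = 0 := by
      intro i' hi'
      simp only [Finset.mem_insert, Finset.mem_singleton] at hi'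
      push_neg at hi'
      match i', hi' with
      | (j+1), hi' => exact hgsitej j (fun h => hi'.2 (by rw [h]))
    show (∑' i', G i' k) = _
    rw [tsum_eq_sum hsuppf, Finset.sum_pair (by omega : (0:ℕ) ≠ i+1)]
    show w0 + gsite i k = _
    rw [hgsitei]
    by_cases hodd : Odd l
    · rw [if_pos hodd, if_pos hodd]; ring
    · rw [if_neg hodd, if_neg hodd]; ring
  -- conclusion
  refine ⟨f, hΨ.memD, fun i => ⟨y i, ?_, ?_⟩⟩
  · exact hEval i (nn i) (y i) (hF5 i) (by rw [hF4 i]; exact notMem_empty _)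
  · intro ψ
    apply hF6 i
    intro a ha b hb la lb ha1 ha2 hb1 hb2 hpar
    have fa := hEval i la a ha1 ha2
    have fb := hEval i lb b hb1 hb2
    by_cases hla : Odd la
    · have hlb : ¬ Odd lb := hpar.mp hla
      show dist (ψ (z i)) (ψ (w i)) ≤ dist (ψ (f a)) (ψ (f b))
      rw [fa, fb, if_pos hla, if_neg hlb]
    · have hlb : Odd lb := by
        by_contra hc
        exact hla (hpar.mpr hc)
      show dist (ψ (z i)) (ψ (w i)) ≤ dist (ψ (f a)) (ψ (f b))
      rw [fa, fb, if_neg hla, if_pos hlb, dist_comm]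
theorem fast_subseq {u : ℕ → ℂ} {c : ℂ} (h : Tendsto u atTop (𝓝 c)) :
    ∃ s : ℕ → ℕ, StrictMono s ∧ ∀ i, dist (u (s i)) c ≤ (1/2 : ℝ)^i := by
  choose N hN using fun i : ℕ =>
    Metric.tendsto_atTop.mp h ((1/2 : ℝ)^i) (by positivity)
  set s : ℕ → ℕ := fun i => Nat.rec (N 0) (fun i prev => max (N (i+1)) (prev + 1)) i with hs
  have hssucc : ∀ i, s (i+1) = max (N (i+1)) (s i + 1) := fun i => rfl
  have hges : ∀ i, N i ≤ s i := by
    intro i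
    cases i with
    | zero => exact le_rfl
    | succ i => rw [hssucc i]; exact le_max_left _ _
  refine ⟨s, strictMono_nat_of_lt_succ (fun i => ?_), fun i => ?_⟩
  · rw [hssucc i]
    have := le_max_right (N (i+1)) (s i + 1)
    omega
  · exact le_of_lt (hN i (s i) (hges i))

theorem phi_bdd (hK : ∀ n : ℕ, 0 < n → (derivedIter K n).Nonempty)
    (φ : ℂ → ℂ) (hop : ∀ f : K → ℂ, MemD f → MemD (fun k => φ (f k)))
    (C : Set ℂ) (hC : IsCompact C) : ∃ B : ℝ, 0 ≤ B ∧ ∀ c ∈ C, ‖φ c‖ ≤ B := by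
  by_contra h
  push_neg at h
  have hbad : ∀ i : ℕ, ∃ c ∈ C, (i : ℝ) < ‖φ c‖ := by
    intro i
    obtain ⟨c, hc, hlt⟩ := h i (Nat.cast_nonneg i)
    exact ⟨c, hc, hlt⟩
  choose u hu hu' using hbad
  obtain ⟨cstar, hcs, κ, hκ, hκt⟩ := hC.tendsto_subseq hu
  obtain ⟨s, hsmono, hsdist⟩ := fast_subseq hκt
  set W : ℕ → ℂ := fun i => u (κ (s i)) with hW
  have hsum : Summable (fun i => 2 * ‖W i - cstar‖ + 2 * (((0:ℕ) : ℝ) + 1) * ‖cstar - W i‖) := by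
    apply Summable.of_nonneg_of_le (fun i => by positivity)
      (fun i => ?_) (summable_geometric_two.mul_left 4)
    have h1 : ‖W i - cstar‖ ≤ (1/2 : ℝ)^i := by
      rw [← dist_eq_norm]
      exact hsdist i
    have h2 : ‖cstar - W i‖ ≤ (1/2 : ℝ)^i := by
      rw [norm_sub_rev, ← dist_eq_norm]
      exact hsdist i
    push_cast
    linarith
  obtain ⟨f, hfD, hx⟩ := construct hK (fun _ => cstar) W cstar (fun _ => 0) hsum
  obtain ⟨Φ, M, hrep⟩ := memD_goodRep (hop f hfD)
  obtain ⟨n, hn⟩ := exists_nat_gt M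
  obtain ⟨x, hval, _⟩ := hx n
  have h1 : f x = W n := by
    rw [hval, if_neg (by decide : ¬ Odd 0)]
  have h2 : ‖φ (f x)‖ ≤ M := hrep.norm_f_le x
  rw [h1] at h2
  have h3 : (κ (s n) : ℝ) < ‖φ (W n)‖ := hu' (κ (s n))
  have h4 : (n : ℕ) ≤ κ (s n) := le_trans (hsmono.le_apply) (hκ.le_apply)
  have h5 : (n : ℝ) ≤ (κ (s n) : ℝ) := by exact_mod_cast h4
  linarith


theorem stmt11_main (hK : ∀ n : ℕ, 0 < n → (derivedIter K n).Nonempty)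
    (φ : ℂ → ℂ)
    (hop : ∀ f : K → ℂ, MemD f → MemD (fun k => φ (f k))) :
    ∀ C : Set ℂ, IsCompact C → ∃ M : NNReal, LipschitzOnWith M φ C := by
  intro C hC
  by_contra hlip
  push_neg at hlip
  obtain ⟨B, hB0, hB⟩ := phi_bdd hK φ hop C hC
  have hbad : ∀ i : ℕ, ∃ zz ∈ C, ∃ ww ∈ C,
      ((i:ℝ)+1) * 4^i * dist zz ww < dist (φ zz) (φ ww) := by
    intro i
    have h0 := hlip (⟨((i:ℝ)+1) * 4^i, by positivity⟩ : NNReal)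
    replace h0 := mt lipschitzOnWith_iff_dist_le_mul.mpr h0
    push_neg at h0
    obtain ⟨zz, hz, ww, hw, hlt⟩ := h0
    refine ⟨zz, hz, ww, hw, ?_⟩
    calc ((i:ℝ)+1) * 4^i * dist zz ww
        = (⟨((i:ℝ)+1) * 4^i, by positivity⟩ : NNReal) * dist zz ww := by norm_num
      _ < dist (φ zz) (φ ww) := hlt
  choose z1 hz1 w1 hw1 hlt1 using hbad
  obtain ⟨wstar, hws, κ, hκ, hκt⟩ := hC.tendsto_subseq hw1
  obtain ⟨s, hsmono, hsdist⟩ := fast_subseq hκt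
  set idx : ℕ → ℕ := fun i => κ (s i) with hidxdef
  set Z : ℕ → ℂ := fun i => z1 (idx i) with hZ
  set W : ℕ → ℂ := fun i => w1 (idx i) with hWdef
  set δ : ℕ → ℝ := fun i => dist (φ (Z i)) (φ (W i)) with hδ
  have hidxge : ∀ i : ℕ, i ≤ idx i := fun i =>
    le_trans (hsmono.le_apply) (hκ.le_apply)
  have hδpos : ∀ i, 0 < δ i := fun i =>
    lt_of_le_of_lt (by positivity) (hlt1 (idx i))
  have hδle : ∀ i, δ i ≤ 2 * B := by
    intro i
    have h1 : ‖φ (Z i)‖ ≤ B := hB _ (hz1 (idx i))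
    have h2 : ‖φ (W i)‖ ≤ B := hB _ (hw1 (idx i))
    calc δ i = ‖φ (Z i) - φ (W i)‖ := by
          show dist (φ (Z i)) (φ (W i)) = _
          rw [dist_eq_norm]
      _ ≤ ‖φ (Z i)‖ + ‖φ (W i)‖ := norm_sub_le _ _
      _ ≤ 2 * B := by linarith
  set nn : ℕ → ℕ := fun i => Nat.ceil (((i:ℝ)+1) / δ i) with hnn
  have hnnδ : ∀ i : ℕ, (i:ℝ)+1 ≤ (nn i : ℝ) * δ i := by
    intro i
    have h1 : ((i:ℝ)+1) / δ i ≤ (nn i : ℝ) := Nat.le_ceil _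
    rw [div_le_iff₀ (hδpos i)] at h1
    linarith
  -- the cost estimate
  have hP : ∀ i : ℕ, ((i:ℝ)+1) * 4^i ≤ ((idx i : ℝ)+1) * 4^(idx i) := by
    intro i
    have h1 : ((i:ℝ)+1) ≤ ((idx i : ℝ)+1) := by
      have := hidxge i
      have : (i:ℝ) ≤ (idx i : ℝ) := by exact_mod_cast this
      linarith
    have h2 : (4:ℝ)^i ≤ 4^(idx i) := pow_le_pow_right₀ (by norm_num) (hidxge i)
    have h3 : (0:ℝ) < 4^i := by positivity
    nlinarith
  have hDD : ∀ i : ℕ, dist (Z i) (W i) * (((i:ℝ)+1) * 4^i) ≤ δ i := by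
    intro i
    have h0 := hlt1 (idx i)
    have h1 : ((idx i:ℝ)+1) * 4^(idx i) * dist (Z i) (W i) < δ i := h0
    have h2 := hP i
    nlinarith [dist_nonneg (x := Z i) (y := W i)]
  have hhalf : ∀ i : ℕ, (1:ℝ)/4^i ≤ (1/2 : ℝ)^i := by
    intro i
    rw [show ((1:ℝ)/2)^i = 1/2^i by rw [div_pow, one_pow]]
    exact one_div_le_one_div_of_le (by positivity) (pow_le_pow_left₀ (by norm_num) (by norm_num) i)
  have hcost : ∀ i : ℕ, ((nn i : ℝ)+1) * dist (Z i) (W i) ≤ (1 + 4*B) * (1/2:ℝ)^i := by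
    intro i
    have h4pos : (0:ℝ) < 4^i := by positivity
    have hd0 : (0:ℝ) ≤ dist (Z i) (W i) := dist_nonneg
    have hnn1 : (nn i : ℝ) < ((i:ℝ)+1)/δ i + 1 := Nat.ceil_lt_add_one (by positivity)
    have h6 : ((i:ℝ)+1) * dist (Z i) (W i) ≤ δ i / 4^i := by
      rw [le_div_iff₀ h4pos]
      nlinarith [hDD i]
    have h7 : ((i:ℝ)+1) * dist (Z i) (W i) / δ i ≤ 1/4^i := by
      rw [div_le_div_iff₀ (hδpos i) h4pos]
      nlinarith [hDD i]
    have h8 : dist (Z i) (W i) ≤ 2*B/4^i := by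
      rw [le_div_iff₀ h4pos]
      have h9 : dist (Z i) (W i) * 4^i ≤ dist (Z i) (W i) * (((i:ℝ)+1) * 4^i) := by
        apply mul_le_mul_of_nonneg_left _ hd0
        nlinarith [Nat.cast_nonneg (α := ℝ) i]
      linarith [hDD i, hδle i]
    calc ((nn i : ℝ)+1) * dist (Z i) (W i)
        ≤ (((i:ℝ)+1)/δ i + 2) * dist (Z i) (W i) := by
          apply mul_le_mul_of_nonneg_right _ hd0
          linarith
      _ = ((i:ℝ)+1) * dist (Z i) (W i) / δ i + 2 * dist (Z i) (W i) := by ring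
      _ ≤ 1/4^i + 2 * (2*B/4^i) := by
          have := h7
          have := h8
          linarith
      _ = (1 + 4*B) * (1/4^i) := by ring
      _ ≤ (1 + 4*B) * (1/2:ℝ)^i := by
          apply mul_le_mul_of_nonneg_left (hhalf i)
          linarith
  have hsum : Summable (fun i => 2 * ‖W i - wstar‖ + 2 * ((nn i : ℝ) + 1) * ‖Z i - W i‖) := by
    apply Summable.of_nonneg_of_le (fun i => by positivity)
      (fun i => ?_) ((summable_geometric_two).mul_left (2 + 2*(1+4*B)))
    have h1 : ‖W i - wstar‖ ≤ (1/2 : ℝ)^i := by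
      rw [← dist_eq_norm]
      exact hsdist i
    have h2 : ((nn i : ℝ) + 1) * ‖Z i - W i‖ ≤ (1 + 4*B) * (1/2:ℝ)^i := by
      rw [← dist_eq_norm]
      exact hcost i
    have h3 : (0:ℝ) < (1/2:ℝ)^i := by positivity
    calc 2 * ‖W i - wstar‖ + 2 * ((nn i : ℝ) + 1) * ‖Z i - W i‖
        ≤ 2 * (1/2:ℝ)^i + 2 * ((1 + 4*B) * (1/2:ℝ)^i) := by
          have h4 : 2 * ((nn i : ℝ) + 1) * ‖Z i - W i‖
              = 2 * (((nn i : ℝ) + 1) * ‖Z i - W i‖) := by ring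
          rw [h4]
          have h5 : (0:ℝ) ≤ ((nn i:ℝ)+1) * ‖Z i - W i‖ := by positivity
          linarith
      _ = (2 + 2*(1+4*B)) * (1/2:ℝ)^i := by ring
  obtain ⟨f, hfD, hx⟩ := construct hK Z W wstar nn hsum
  obtain ⟨Φ, M, hrep⟩ := memD_goodRep (hop f hfD)
  -- contradiction index
  obtain ⟨n, hn⟩ := exists_nat_gt (2*M + 2)
  obtain ⟨x, _, hchain⟩ := hx n
  have hch : chain (fun k => φ (f k)) (δ n) (nn n) x := hchain φ
  obtain ⟨yy, _, hbig⟩ := core Φ (fun k => φ (f k)) M hrep (δ n) (nn n) x hch 0 1 one_pos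
  have htsum : (∑' j, ‖Φ (j + 0) yy‖) ≤ M := by
    simp only [add_zero]
    exact (hrep.summable_norm yy).tsum_le_of_sum_range_le
      (fun m => hrep.2.2 yy (Finset.range m))
  have hlow : ((n:ℝ)+1)/2 - 1 ≤ (nn n : ℝ) * (δ n / 2) - 1 := by
    have := hnnδ n
    linarith
  linarith
end Stmt11aux
end Stmt11Aux

/-- if all finite derived sets of `K` are nonempty and `φ∘f ∈ D(K)` for
every `f ∈ D(K)`, then `φ` is locally Lipschitz. -/
theorem stmt11 {K : Type u} [MetricSpace K]
    (hK : ∀ n : ℕ, 0 < n → (derivedIter K n).Nonempty)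
    (φ : ℂ → ℂ)
    (hop : ∀ f : K → ℂ, MemD f → MemD (fun k => φ (f k))) :
    ∀ C : Set ℂ, IsCompact C → ∃ M : NNReal, LipschitzOnWith M φ C :=
  Stmt11aux.stmt11_main hK φ hop
end
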